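/- arXiv:2011.13550 — 9 statements merged into one kernel-verified Lean document; each statement's English description precedes it below -/
import Mathlib

section
/- Let U be a finite set and T_1,…,T_M ⊆ U with M ≥ 1, and suppose ⋃_{i=1}^{t} T_i = U for some integer 1 ≤ t ≤ M. Let γ = 0.01/M². Define w ∈ ℝ^{M+2} with coordinates (w_{T_1},…,w_{T_M}, w_one, w_gam) by w_{T_i} = −1 for i ≤ t, w_{T_i} = 0 for i > t, w_one = 1, and w_gam = γ. Then E(w) = t·γ², where E(w) = Σ_{u∈U} (max(0, w_one + Σ_{i : u∈T_i} w_{T_i}))² + Σ_{i=1}^{M} (max(0, w_gam + w_{T_i}) − γ)² + (max(0, w_one) − 1)² + (max(0, w_gam) − γ)². -/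
/-!
A cover uses each of its sets with weight `-1`, so every element of `U` lies in some set of weight
`-1`, and its neuron `[1 + ∑ wT]₊` is switched off: the data term vanishes. The only error left
comes from the `M` gadget points `[γ + w_{T_i}]₊ = γ`, which miss their target by exactly `γ` for
the `t` sets in the cover (where `[γ - 1]₊ = 0`, since `γ ≤ 1`) and are exact otherwise.
-/

open Finset

theorem Finset.sum_le_of_nonpos_of_mem {ι N : Type*} [AddCommMonoid N] [PartialOrder N]
    [IsOrderedAddMonoid N] {s : Finset ι} {f : ι → N} (hf : ∀ i ∈ s, f i ≤ 0) {a : ι}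
    (ha : a ∈ s) : ∑ i ∈ s, f i ≤ f a := by
  classical
  rw [← add_sum_erase s f ha]
  exact add_le_of_nonpos_right (sum_nonpos fun i hi => hf i (mem_of_mem_erase hi))

theorem relu_one_add_sum_eq_zero {ι : Type*} {s : Finset ι} {f : ι → ℝ}
    (hf : ∀ i ∈ s, f i ≤ 0) {a : ι} (ha : a ∈ s) (hfa : f a ≤ -1) :
    max 0 (1 + ∑ i ∈ s, f i) = 0 :=
  max_eq_left (by linarith [sum_le_of_nonpos_of_mem hf ha])

theorem sum_sq_relu_gadget_sub {M t : ℕ} (htM : t ≤ M) {γ : ℝ} (hγ0 : 0 ≤ γ) (hγ1 : γ ≤ 1) :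
    ∑ i : Fin M, (max 0 (γ + if (i : ℕ) < t then -1 else 0) - γ) ^ 2 = t * γ ^ 2 := by
  have hterm (i : Fin M) : (max 0 (γ + if (i : ℕ) < t then -1 else 0) - γ) ^ 2
      = if (i : ℕ) < t then γ ^ 2 else 0 := by
    split_ifs
    · rw [max_eq_left (by linarith)]; ring
    · rw [add_zero, max_eq_right hγ0, sub_self, sq, zero_mul]
  simp only [hterm, sum_ite, sum_const_zero, sum_const, add_zero, Fin.card_filter_val_lt,
    min_eq_right htM, nsmul_eq_mul]

theorem div_natCast_sq_le_one {c : ℝ} (hc : c ≤ 1) (M : ℕ) : c / (M : ℝ) ^ 2 ≤ 1 := by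
  rcases M.eq_zero_or_pos with rfl | hM
  · simp
  · have hM1 : (1 : ℝ) ≤ M := by exact_mod_cast hM
    rw [div_le_one (by positivity)]
    nlinarith

theorem setCover_reduction_completeness_general
    (U : Type*) [Fintype U] [DecidableEq U]
    (M t : ℕ) (htM : t ≤ M)
    (T : Fin M → Finset U)
    (hcover : ∀ u : U, ∃ i : Fin M, (i : ℕ) < t ∧ u ∈ T i) :
    let γ : ℝ := 0.01 / (M : ℝ) ^ 2
    let wT : Fin M → ℝ := fun i => if (i : ℕ) < t then -1 else 0
    let wone : ℝ := 1
    let wgam : ℝ := γ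
    (∑ u : U, (max 0 (wone + ∑ i ∈ Finset.univ.filter (fun i => u ∈ T i), wT i)) ^ 2)
      + (∑ i : Fin M, (max 0 (wgam + wT i) - γ) ^ 2)
      + (max 0 wone - 1) ^ 2 + (max 0 wgam - γ) ^ 2
      = (t : ℝ) * γ ^ 2 := by
  dsimp only
  set γ : ℝ := 0.01 / (M : ℝ) ^ 2
  have hγ0 : 0 ≤ γ := by positivity
  have hcovered (u : U) :
      max 0 (1 + ∑ i ∈ univ.filter (fun i => u ∈ T i), if (i : ℕ) < t then (-1 : ℝ) else 0)
        = 0 := by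
    obtain ⟨i, hit, hui⟩ := hcover u
    refine relu_one_add_sum_eq_zero (fun j _ => ?_) (mem_filter.2 ⟨mem_univ i, hui⟩) ?_
    · split_ifs <;> norm_num
    · simp [hit]
  rw [sum_sq_relu_gadget_sub htM hγ0 (div_natCast_sq_le_one (by norm_num) M)]
  simp [hcovered, hγ0]

/-- Completeness of the Set Cover → 1-ReLU training reduction:
the weight vector induced by a set cover of size `t` incurs total squared error
exactly `t·γ²`. -/
theorem setCover_reduction_completeness
    (U : Type*) [Fintype U] [DecidableEq U]
    (M t : ℕ) (hM : 1 ≤ M) (ht1 : 1 ≤ t) (htM : t ≤ M)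
    (T : Fin M → Finset U)
    (hcover : ∀ u : U, ∃ i : Fin M, (i : ℕ) < t ∧ u ∈ T i) :
    let γ : ℝ := 0.01 / (M : ℝ) ^ 2
    let wT : Fin M → ℝ := fun i => if (i : ℕ) < t then -1 else 0
    let wone : ℝ := 1
    let wgam : ℝ := γ
    (∑ u : U, (max 0 (wone + ∑ i ∈ Finset.univ.filter (fun i => u ∈ T i), wT i)) ^ 2)
      + (∑ i : Fin M, (max 0 (wgam + wT i) - γ) ^ 2)
      + (max 0 wone - 1) ^ 2 + (max 0 wgam - γ) ^ 2
      = (t : ℝ) * γ ^ 2 :=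
  setCover_reduction_completeness_general U M t htM T hcover
end

section
/- Let U be a finite set and T_1,…,T_M ⊆ U with M ≥ 1, let 1 ≤ t ≤ M be an integer, and let γ = 0.01/M². Suppose w ∈ ℝ^{M+2} (with coordinates w_{T_1},…,w_{T_M}, w_one, w_gam) satisfies E(w) ≤ γ²·t, where E(w) = Σ_{u∈U} (max(0, w_one + Σ_{i : u∈T_i} w_{T_i}))² + Σ_{i=1}^{M} (max(0, w_gam + w_{T_i}) − γ)² + (max(0, w_one) − 1)² + (max(0, w_gam) − γ)². Then the index set I = {i ∈ {1,…,M} : w_{T_i} < −w_gam} satisfies ⋃_{i∈I} T_i = U and |I| ≤ t. -/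
/-!
Write `ε = γ·M = 0.01/M`; the error budget `γ²·t` is at most `ε²`, so every one of the
squared terms of `E(w)` is at most `ε²`. The last two terms force `w_one ≥ 1 - ε` and
`w_gam ≤ γ + ε`, and the term of an element `u` forces `w_one + Σ_{u ∈ T_i} w_{T_i} ≤ ε`.
Hence the weights of the sets containing `u` sum to at most `2ε - 1 ≤ -0.98`, whereas if all of
them were `≥ -w_gam` the sum would be at least `-M·(γ + ε) ≥ -0.02`: some set of `I` contains `u`.
Each `i ∈ I` has a dead neuron `[w_gam + w_{T_i}]₊ = 0`, which costs exactly `γ²`, so `|I|·γ² ≤ γ²·t`.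
-/

open Finset

lemma le_of_sq_max_zero_le {x ε : ℝ} (h : max 0 x ^ 2 ≤ ε ^ 2) (hε : 0 ≤ ε) : x ≤ ε :=
  (le_max_right 0 x).trans (le_of_sq_le_sq h hε)

lemma le_add_of_sq_max_zero_sub_le {x a ε : ℝ} (h : (max 0 x - a) ^ 2 ≤ ε ^ 2) (hε : 0 ≤ ε) :
    x ≤ a + ε := by
  linarith [le_max_right 0 x, le_of_sq_le_sq h hε]

lemma sub_le_of_sq_max_zero_sub_le {x a ε : ℝ} (h : (max 0 x - a) ^ 2 ≤ ε ^ 2) (hε : 0 ≤ ε)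
    (hεa : ε < a) : a - ε ≤ x := by
  have hlow : a - ε ≤ max 0 x := by linarith [(abs_le_of_sq_le_sq' h hε).1]
  exact (le_max_iff.1 hlow).resolve_left (by linarith)

section ReLUTraining

variable {U : Type*} [Fintype U] [DecidableEq U] {M : ℕ} (T : Fin M → Finset U) (γ : ℝ)
  (wT : Fin M → ℝ) (wone wgam : ℝ)

/-- `E(w)` for `w = (wT, wone, wgam)`. -/
def trainingError : ℝ :=
  (∑ u : U, (max 0 (wone + ∑ i ∈ univ.filter (fun i => u ∈ T i), wT i)) ^ 2)
    + (∑ i : Fin M, (max 0 (wgam + wT i) - γ) ^ 2)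
    + (max 0 wone - 1) ^ 2 + (max 0 wgam - γ) ^ 2

lemma elementError_le_trainingError (u : U) :
    (max 0 (wone + ∑ i ∈ univ.filter (fun i => u ∈ T i), wT i)) ^ 2
      ≤ trainingError T γ wT wone wgam := by
  unfold trainingError
  refine le_add_of_le_of_nonneg (le_add_of_le_of_nonneg
    (le_add_of_le_of_nonneg ?_ (by positivity)) (sq_nonneg _)) (sq_nonneg _)
  exact single_le_sum (f := fun v : U =>
    (max 0 (wone + ∑ i ∈ univ.filter (fun i => v ∈ T i), wT i)) ^ 2)
    (fun _ _ => sq_nonneg _) (mem_univ u)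

lemma oneError_le_trainingError : (max 0 wone - 1) ^ 2 ≤ trainingError T γ wT wone wgam := by
  unfold trainingError
  exact le_add_of_le_of_nonneg (le_add_of_nonneg_left (by positivity)) (sq_nonneg _)

lemma gamError_le_trainingError : (max 0 wgam - γ) ^ 2 ≤ trainingError T γ wT wone wgam :=
  le_add_of_nonneg_left (by positivity)

lemma card_mul_sq_le_trainingError :
    (univ.filter (fun i : Fin M => wT i < -wgam)).card * γ ^ 2
      ≤ trainingError T γ wT wone wgam := by
  set I := univ.filter (fun i : Fin M => wT i < -wgam)
  have hdead : ∀ i ∈ I, (max 0 (wgam + wT i) - γ) ^ 2 = γ ^ 2 := fun i hi => by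
    rw [max_eq_left (by linarith [(mem_filter.1 hi).2])]
    ring
  have hI : (I.card : ℝ) * γ ^ 2 ≤ ∑ i : Fin M, (max 0 (wgam + wT i) - γ) ^ 2 := by
    rw [← nsmul_eq_mul, ← sum_const, ← sum_congr rfl hdead]
    exact sum_le_sum_of_subset_of_nonneg (subset_univ I) fun _ _ _ => sq_nonneg _
  unfold trainingError
  exact le_add_of_le_of_nonneg (le_add_of_le_of_nonneg
    (le_add_of_nonneg_of_le (by positivity) hI) (sq_nonneg _)) (sq_nonneg _)

lemma card_le_of_trainingError_le {t : ℕ} (hγ : 0 < γ)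
    (hE : trainingError T γ wT wone wgam ≤ γ ^ 2 * t) :
    (univ.filter (fun i : Fin M => wT i < -wgam)).card ≤ t := by
  have h := (card_mul_sq_le_trainingError T γ wT wone wgam).trans hE
  rw [mul_comm (γ ^ 2)] at h
  exact_mod_cast le_of_mul_le_mul_right h (by positivity)

lemma exists_lt_neg_of_trainingError_le {ε : ℝ} (hγ : 0 ≤ γ) (hε : 0 ≤ ε)
    (hsmall : M * (γ + ε) + 2 * ε < 1) (hE : trainingError T γ wT wone wgam ≤ ε ^ 2) (u : U) :
    ∃ i, wT i < -wgam ∧ u ∈ T i := by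
  set s := univ.filter (fun i => u ∈ T i)
  have hone : 1 - ε ≤ wone := sub_le_of_sq_max_zero_sub_le
    ((oneError_le_trainingError T γ wT wone wgam).trans hE) hε (by nlinarith)
  have hgam : wgam ≤ γ + ε :=
    le_add_of_sq_max_zero_sub_le ((gamError_le_trainingError T γ wT wone wgam).trans hE) hε
  have hu : wone + ∑ i ∈ s, wT i ≤ ε :=
    le_of_sq_max_zero_le ((elementError_le_trainingError T γ wT wone wgam u).trans hE) hε
  have hcard : (s.card : ℝ) ≤ M := by exact_mod_cast (card_le_univ s).trans (Fintype.card_fin M).le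
  have hspread : s.card * wgam ≤ M * (γ + ε) :=
    (mul_le_mul_of_nonneg_left hgam (Nat.cast_nonneg _)).trans
      (mul_le_mul_of_nonneg_right hcard (by linarith))
  have hlt : ∑ i ∈ s, wT i < ∑ _i ∈ s, -wgam := by
    rw [sum_const, nsmul_eq_mul]
    linarith
  obtain ⟨i, hi, hlt⟩ := exists_lt_of_sum_lt hlt
  exact ⟨i, hlt, (mem_filter.1 hi).2⟩

end ReLUTraining

theorem setCover_reduction_soundness_general
    (U : Type*) [Fintype U] [DecidableEq U]
    (M t : ℕ) (hM : 1 ≤ M) (htM : t ≤ M)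
    (T : Fin M → Finset U)
    (γ : ℝ) (hγ : γ = 0.01 / (M : ℝ) ^ 2)
    (wT : Fin M → ℝ) (wone wgam : ℝ)
    (hE : (∑ u : U, (max 0 (wone + ∑ i ∈ Finset.univ.filter (fun i => u ∈ T i), wT i)) ^ 2)
        + (∑ i : Fin M, (max 0 (wgam + wT i) - γ) ^ 2)
        + (max 0 wone - 1) ^ 2 + (max 0 wgam - γ) ^ 2
        ≤ γ ^ 2 * (t : ℝ)) :
    (∀ u : U, ∃ i : Fin M, wT i < -wgam ∧ u ∈ T i) ∧
      (Finset.univ.filter (fun i : Fin M => wT i < -wgam)).card ≤ t := by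
  have hE : trainingError T γ wT wone wgam ≤ γ ^ 2 * t := hE
  have hM1 : (1 : ℝ) ≤ M := by exact_mod_cast hM
  have htM : (t : ℝ) ≤ M := by exact_mod_cast htM
  have hγ0 : 0 < γ := by rw [hγ]; positivity
  have hMγ : M ^ 2 * γ = 0.01 := by rw [hγ]; field_simp
  have hMγ_le : M * γ ≤ 0.01 := by nlinarith
  have hbudget : γ ^ 2 * t ≤ (γ * M) ^ 2 := by nlinarith [sq_nonneg γ]
  refine ⟨exists_lt_neg_of_trainingError_le T γ wT wone wgam hγ0.le (by positivity) ?_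
      (hE.trans hbudget), card_le_of_trainingError_le T γ wT wone wgam hγ0 hE⟩
  nlinarith

/-- Soundness of the Set Cover → 1-ReLU training reduction:
if the total squared error of a weight vector is at most `γ²·t`, then the
subsets whose weight is below `−w_gam` form a set cover of size at most `t`. -/
theorem setCover_reduction_soundness
    (U : Type*) [Fintype U] [DecidableEq U]
    (M t : ℕ) (hM : 1 ≤ M) (ht1 : 1 ≤ t) (htM : t ≤ M)
    (T : Fin M → Finset U)
    (γ : ℝ) (hγ : γ = 0.01 / (M : ℝ) ^ 2)
    (wT : Fin M → ℝ) (wone wgam : ℝ)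
    (hE : (∑ u : U, (max 0 (wone + ∑ i ∈ Finset.univ.filter (fun i => u ∈ T i), wT i)) ^ 2)
        + (∑ i : Fin M, (max 0 (wgam + wT i) - γ) ^ 2)
        + (max 0 wone - 1) ^ 2 + (max 0 wgam - γ) ^ 2
        ≤ γ ^ 2 * (t : ℝ)) :
    (∀ u : U, ∃ i : Fin M, wT i < -wgam ∧ u ∈ T i) ∧
      (Finset.univ.filter (fun i : Fin M => wT i < -wgam)).card ≤ t :=
  setCover_reduction_soundness_general U M t hM htM T γ hγ wT wone wgam hE
end

section
/- Let G = (V,E) be a finite simple graph with N = |V| ≥ 1 vertices and M = |E| ≥ 1 edges, in which every vertex has degree at most d (d ≥ 1). Let κ ≥ 1 be an integer with κ ≤ N, let ℓ ≥ 0, and suppose T ⊆ V with |T| = κ induces at least ℓ edges. Set δ = 1/(2√κ), γ = 1/(1000d), ζ = 1/(10^{10} d²), and OPT = (1−γ)ζ·(1 − κδ/(√2·N) + κδ²/(8N)) + γζ·(1 − ℓδ/(2√2·M) + ℓδ²/(32M)). Define w = ((w_v)_{v∈V}, w_*) ∈ ℝ^{N+1} by w_* = 1/√2, w_v = 1/√(2κ)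 for v ∈ T and w_v = 0 otherwise. Then ‖w‖₂ = 1 and L(w) ≤ OPT, where L(w) = (1−ζ)·(1/√2 − max(0, w_*))² + ((1−γ)ζ/N)·Σ_{v∈V} (1 − (1/2)·max(0, w_v − δ w_*))² + (γζ/M)·Σ_{{u,v}∈E} (1 − (1/2)·max(0, w_u + w_v − 3.5·δ w_*))². -/
/-!
A vertex of `T` has weight `x = 1/√(2κ) = √2 δ`, and `δ w_* = x / 2`. So the vertex ReLU is
active exactly on `T`, and the edge ReLU, with threshold `3.5 δ w_* = 7x/4`, exactly on the edges
induced by `T` (where `w_u + w_v = 2x`). The loss is therefore affine in `|T| = κ` and in the number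
of induced edges, with a nonpositive coefficient on the latter; putting `ℓ` for that number
gives `OPT`.
-/

open Finset

section

variable {V : Type*} [DecidableEq V]

theorem sum_comp_ite_mem [Fintype V] (T : Finset V) {w : V → ℝ} {x : ℝ}
    (hw : ∀ v, w v = if v ∈ T then x else 0) (g : ℝ → ℝ) :
    ∑ v, g (w v) = Fintype.card V * g 0 + #T * (g x - g 0) := by
  calc ∑ v, g (w v) = ∑ v, (g 0 + if v ∈ T then g x - g 0 else 0) := by
        refine sum_congr rfl fun v _ => ?_
        rw [hw]; split_ifs <;> ring
    _ = Fintype.card V * g 0 + #T * (g x - g 0) := by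
        rw [sum_add_distrib, sum_ite_mem, univ_inter]; simp [mul_sub]

theorem sum_lift_comp_add_of_ite_mem (E : Finset (Sym2 V)) (T : Finset V) {w : V → ℝ} {x : ℝ}
    (hw : ∀ v, w v = if v ∈ T then x else 0) (g : ℝ → ℝ) (hg : g x = g 0) :
    ∑ e ∈ E, Sym2.lift ⟨fun a b => g (w a + w b), fun a b => congrArg g (add_comm (w a) (w b))⟩ e
      = #E * g 0 + #(E ∩ T.sym2) * (g (x + x) - g 0) := by
  have hterm : ∀ e : Sym2 V,
      Sym2.lift ⟨fun a b => g (w a + w b), fun a b => congrArg g (add_comm (w a) (w b))⟩ e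
        = g 0 + if e ∈ T.sym2 then g (x + x) - g 0 else 0 := by
    refine Sym2.ind fun a b => ?_
    simp only [Sym2.lift_mk, mk_mem_sym2_iff, hw]
    by_cases ha : a ∈ T <;> by_cases hb : b ∈ T <;> simp [ha, hb, hg]
  rw [sum_congr rfl fun e _ => hterm e, sum_add_distrib, sum_ite_mem]
  simp [mul_sub]

theorem sum_vertex_loss_eq [Fintype V] (T : Finset V) {w : V → ℝ} {x c : ℝ}
    (hw : ∀ v, w v = if v ∈ T then x else 0) (hc : 0 ≤ c) (hcx : c ≤ x) :
    ∑ v, (1 - 1 / 2 * max 0 (w v - c)) ^ 2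
      = Fintype.card V + #T * ((1 - (x - c) / 2) ^ 2 - 1) := by
  rw [sum_comp_ite_mem T hw (fun t => (1 - 1 / 2 * max 0 (t - c)) ^ 2),
    max_eq_left (show 0 - c ≤ 0 by linarith), max_eq_right (show 0 ≤ x - c by linarith)]
  ring

theorem sum_edge_loss_eq (E : Finset (Sym2 V)) (T : Finset V) {w : V → ℝ} {x c : ℝ}
    (hw : ∀ v, w v = if v ∈ T then x else 0) (hxc : x ≤ c) (hcx : c ≤ x + x) :
    ∑ e ∈ E, Sym2.lift ⟨fun a b => (1 - 1 / 2 * max 0 (w a + w b - c)) ^ 2,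
        fun a b => by dsimp only; rw [add_comm (w a)]⟩ e
      = #E + #(E ∩ T.sym2) * ((1 - (x + x - c) / 2) ^ 2 - 1) := by
  have hx0 : 0 - c ≤ 0 := by linarith
  rw [sum_lift_comp_add_of_ite_mem E T hw (fun t => (1 - 1 / 2 * max 0 (t - c)) ^ 2)
      (by rw [max_eq_left hx0, max_eq_left (show x - c ≤ 0 by linarith)]),
    max_eq_left hx0, max_eq_right (show 0 ≤ x + x - c by linarith)]
  ring

end

theorem mul_one_div_two_mul_sqrt_sq {a : ℝ} (ha : 0 < a) : a * (1 / (2 * √a)) ^ 2 = 1 / 4 := by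
  rw [div_pow, mul_pow, Real.sq_sqrt ha.le]; field_simp; norm_num

theorem one_div_sqrt_two_mul (a : ℝ) : 1 / √(2 * a) = √2 * (1 / (2 * √a)) := by
  rw [Real.sqrt_mul zero_le_two, ← one_div_mul_one_div, ← Real.sqrt_div_self' (x := 2)]; ring

theorem sq_one_sub_sub_one_nonpos {y : ℝ} (h0 : 0 ≤ y) (h2 : y ≤ 2) : (1 - y) ^ 2 - 1 ≤ 0 := by
  nlinarith

theorem dks_opt_identity {s δ a b N M κ ℓ : ℝ} (hs : s ^ 2 = 2) (hN : N ≠ 0) (hM : M ≠ 0) :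
    a / N * (N + κ * ((1 - s * δ / 4) ^ 2 - 1)) + b / M * (M + ℓ * ((1 - s * δ / 8) ^ 2 - 1))
      = a * (1 - κ * δ / (s * N) + κ * δ ^ 2 / (8 * N))
        + b * (1 - ℓ * δ / (2 * s * M) + ℓ * δ ^ 2 / (32 * M)) := by
  have hs0 : s ≠ 0 := by rintro rfl; norm_num at hs
  have hdiv : δ / s = s * δ / 2 := by
    rw [div_eq_div_iff hs0 two_ne_zero]; linear_combination -δ * hs
  have hvertex : (1 - s * δ / 4) ^ 2 - 1 = -(δ / s) + δ ^ 2 / 8 := by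
    rw [hdiv]; linear_combination δ ^ 2 / 16 * hs
  have hedge : (1 - s * δ / 8) ^ 2 - 1 = -(δ / (2 * s)) + δ ^ 2 / 32 := by
    rw [mul_comm 2 s, ← div_div, hdiv]; linear_combination δ ^ 2 / 64 * hs
  rw [hvertex, hedge]
  field_simp
  ring

/-- Completeness of the Densest κ-Subgraph → bounded 1-ReLU training
reduction: the weight vector induced by a set `T` of `κ` vertices inducing at
least `ℓ` edges has unit norm and loss at most `OPT`. -/
theorem dks_reduction_completeness
    (V : Type*) [Fintype V] [DecidableEq V]
    (G : SimpleGraph V) [DecidableRel G.Adj]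
    (d κ : ℕ) (ℓ : ℝ) (N M : ℕ)
    (hN : N = Fintype.card V) (hM : M = G.edgeFinset.card)
    (hN1 : 1 ≤ N) (hM1 : 1 ≤ M)
    (hκ1 : 1 ≤ κ)
    (T : Finset V) (hTcard : T.card = κ)
    (hTind : ℓ ≤ ((G.edgeFinset ∩ T.sym2).card : ℝ)) :
    let δ : ℝ := 1 / (2 * Real.sqrt κ)
    let γ : ℝ := 1 / (1000 * (d : ℝ))
    let ζ : ℝ := 1 / (10 ^ 10 * (d : ℝ) ^ 2)
    let OPT : ℝ := (1 - γ) * ζ * (1 - (κ : ℝ) * δ / (Real.sqrt 2 * N) + (κ : ℝ) * δ ^ 2 / (8 * N))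
      + γ * ζ * (1 - ℓ * δ / (2 * Real.sqrt 2 * M) + ℓ * δ ^ 2 / (32 * M))
    let ws : ℝ := 1 / Real.sqrt 2
    let w : V → ℝ := fun v => if v ∈ T then 1 / Real.sqrt (2 * κ) else 0
    ((∑ v : V, (w v) ^ 2) + ws ^ 2 = 1) ∧
    (1 - ζ) * (1 / Real.sqrt 2 - max 0 ws) ^ 2
      + ((1 - γ) * ζ / N) * ∑ v : V, (1 - (1 / 2) * max 0 (w v - δ * ws)) ^ 2
      + (γ * ζ / M) * ∑ e ∈ G.edgeFinset,
          Sym2.lift ⟨fun u v => (1 - (1 / 2) * max 0 (w u + w v - 3.5 * δ * ws)) ^ 2,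
            by intro a b; dsimp only; rw [add_comm (w a) (w b)]⟩ e
      ≤ OPT := by
  intro δ γ ζ OPT ws w
  have hκ : (0 : ℝ) < κ := by exact_mod_cast hκ1
  have hsqrt2 : √2 ^ 2 = 2 := Real.sq_sqrt zero_le_two
  have hκδ : κ * δ ^ 2 = 1 / 4 := mul_one_div_two_mul_sqrt_sq hκ
  have hws : ws = √2 / 2 := Real.sqrt_div_self'.symm
  have hw : ∀ v, w v = if v ∈ T then √2 * δ else 0 := by
    simp only [w, δ, one_div_sqrt_two_mul, implies_true]
  refine ⟨?_, ?_⟩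
  · rw [sum_comp_ite_mem T hw (· ^ 2), hTcard, hws]
    linear_combination (κ * δ ^ 2 + 1 / 4) * hsqrt2 + 2 * hκδ
  have hδ : 0 < δ := by positivity
  have hδ_le : δ ≤ 1 / 2 := by nlinarith [show (1 : ℝ) ≤ κ by exact_mod_cast hκ1]
  have hq : (1 - √2 * δ / 8) ^ 2 - 1 ≤ 0 :=
    sq_one_sub_sub_one_nonpos (by positivity) (by nlinarith [Real.sqrt_two_lt_three_halves])
  rw [max_eq_right (show 0 ≤ ws by positivity), show 1 / √2 - ws = 0 from sub_self _,
    sum_vertex_loss_eq T hw (c := δ * ws) (by rw [hws]; positivity) (by rw [hws]; nlinarith),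
    sum_edge_loss_eq G.edgeFinset T hw (by rw [hws]; nlinarith) (by rw [hws]; nlinarith),
    ← hN, ← hM, hTcard]
  calc _ = (1 - γ) * ζ / N * (N + κ * ((1 - √2 * δ / 4) ^ 2 - 1))
        + γ * ζ / M * (M + #(G.edgeFinset ∩ T.sym2) * ((1 - √2 * δ / 8) ^ 2 - 1)) := by
        rw [hws]; ring
    _ ≤ (1 - γ) * ζ / N * (N + κ * ((1 - √2 * δ / 4) ^ 2 - 1))
        + γ * ζ / M * (M + ℓ * ((1 - √2 * δ / 8) ^ 2 - 1)) := by
        gcongr _ + γ * ζ / M * (M + ?_)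
        exact mul_le_mul_of_nonpos_right hTind hq
    _ = OPT := dks_opt_identity hsqrt2 (by positivity) (by positivity)
end

section
/- Let G = (V,E) be a finite simple graph with N = |V| ≥ 1 vertices and M = |E| ≥ 1 edges, in which every vertex has degree at most d (d ≥ 1), and assume M ≥ N/5. Let κ be an integer with 2 ≤ κ ≤ N and let ℓ satisfy κ/3 ≤ ℓ ≤ M. Suppose that for every T ⊆ V with |T| ≤ 1000κ, the number of edges induced by T is less than ℓ/1000. Set δ = 1/(2√κ), γ = 1/(1000d), ζ = 1/(10^{10} d²), OPT = (1−γ)ζ·(1 − κδ/(√2·N) + κδ²/(8N)) + γζ·(1 − ℓδ/(2√2·M) + ℓδ²/(32M)), and ε = γζ·ℓδ/(4√2·M) − (1−γ)ζ·κδ²/(8N) − γζ·ℓδ²/(32M). Then for every w = ((w_v)_{v∈V}, w_*) ∈ ℝ^{N+1} with ‖w‖₂ ≤ 1: L(w) > OPT + ε, where L(w) = (1−ζ)·(1/√2 − max(0, w_*))² + ((1−γ)ζ/N)·Σ_{v∈V} (1 − (1/2)·max(0, w_v − δ w_*))² + (γζ/M)·Σ_{{u,v}∈E} (1 − (1/2)·max(0,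 w_u + w_v − 3.5·δ w_*))². -/
/-!
Put `t = δ w_*`. If `w_* ≤ 1/2`, the first loss term alone exceeds `ζ ≥ OPT + ε`. Otherwise,
since `(1 - x/2)² ≥ 1 - x`, it suffices to bound the activation
`Σ_v [w_v - t]₊ + β Σ_{uv ∈ E} [w_u + w_v - 3.5t]₊`, where `β` is the ratio of the edge weight to
the vertex weight in the loss. Call a vertex heavy if `w_v ≥ 1.2t`: as `‖w‖ ≤ 1` there are at most
`1000κ` of them, hence fewer than `ℓ/1000` heavy edges. An edge with a light endpoint is active
only through the excess `[w_v - 2.3t]₊` of its other endpoint, and a heavy edge through at most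
`[w_u - 2t]₊ + [w_v - 2t]₊ + t/2`; as degrees are at most `d`, all of this is absorbed vertex by
vertex into `w_v²/(4t)`. Finally `Σ_v w_v² ≤ 1 - w_*² ≤ w_*/√2 + 5 w_* [1/√2 - w_*]₊`, and the
last term is paid for by the first loss term.
-/

open Finset

section ScalarInequalities

variable {t : ℝ}

lemma max_zero_sub_add_le_sq_div (ht : 0 < t) {b : ℝ} (hb : b ≤ 3 / 20) (w : ℝ) :
    max 0 (w - t) + max 0 (w - 2 * t) ^ 2 / (8 * t) + b * max 0 (w - 2.3 * t)
      ≤ w ^ 2 / (4 * t) := by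
  have hw : 0 ≤ w ^ 2 / (4 * t) := by positivity
  rcases le_total w t with h1 | h1
  · simp [h1, show w ≤ 2 * t by linarith, show w ≤ 2.3 * t by linarith, hw]
  rcases le_total w (2 * t) with h2 | h2
  · rw [max_eq_right (sub_nonneg.2 h1), max_eq_left (sub_nonpos.2 h2),
      max_eq_left (show w - 2.3 * t ≤ 0 by linarith)]
    have : w - t ≤ w ^ 2 / (4 * t) := by
      rw [le_div_iff₀ (by positivity)]; nlinarith [sq_nonneg (w - 2 * t)]
    simpa using this
  rw [max_eq_right (by linarith : 0 ≤ w - t), max_eq_right (sub_nonneg.2 h2)]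
  have key : w - t + (w - 2 * t) ^ 2 / (8 * t) + (w - 2 * t) ^ 2 / (8 * t) = w ^ 2 / (4 * t) := by
    field_simp; ring
  -- so half of `(w - 2t)² / (4t)` is left to pay for the last term
  have hsq : b * max 0 (w - 2.3 * t) ≤ (w - 2 * t) ^ 2 / (8 * t) := by
    rw [le_div_iff₀ (by positivity)]
    rcases le_total w (2.3 * t) with h3 | h3
    · rw [max_eq_left (by linarith), mul_zero, zero_mul]; positivity
    · rw [max_eq_right (by linarith)]
      nlinarith [sq_nonneg (w - 2.6 * t),
        mul_nonneg (mul_nonneg (sub_nonneg.2 hb) ht.le) (sub_nonneg.2 h3)]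
  linarith

lemma max_zero_add_sub_le_of_le_or_le {a b : ℝ} (h : a ≤ 1.2 * t ∨ b ≤ 1.2 * t) :
    max 0 (a + b - 3.5 * t) ≤ max 0 (a - 2.3 * t) + max 0 (b - 2.3 * t) := by
  have := le_max_left 0 (a - 2.3 * t); have := le_max_right 0 (a - 2.3 * t)
  have := le_max_left 0 (b - 2.3 * t); have := le_max_right 0 (b - 2.3 * t)
  refine max_le (by linarith) ?_
  rcases h with h | h <;> linarith

lemma max_zero_add_sub_le (ht : 0 ≤ t) (a b : ℝ) :
    max 0 (a + b - 3.5 * t) ≤ max 0 (a - 2 * t) + max 0 (b - 2 * t) + t / 2 := by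
  have := le_max_left 0 (a - 2 * t); have := le_max_right 0 (a - 2 * t)
  have := le_max_left 0 (b - 2 * t); have := le_max_right 0 (b - 2 * t)
  exact max_le (by linarith) (by linarith)

lemma mul_le_sq_div_add_mul_sq {c : ℝ} (hc : 0 < c) (x y : ℝ) :
    x * y ≤ x ^ 2 / (4 * c) + c * y ^ 2 := by
  have : x ^ 2 / (4 * c) + c * y ^ 2 - x * y = (x - 2 * c * y) ^ 2 / (4 * c) := by
    field_simp; ring
  nlinarith [div_nonneg (sq_nonneg (x - 2 * c * y)) (by positivity : (0:ℝ) ≤ 4 * c)]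

lemma one_sub_sq_le {s : ℝ} (hs : 1 / 2 < s) :
    1 - s ^ 2 ≤ s / √2 + 5 * s * max 0 (1 / √2 - s) := by
  have h2 : √2 ^ 2 = 2 := Real.sq_sqrt (by norm_num)
  have hu : 2 * (1 / √2) ^ 2 = 1 := by rw [div_pow, h2]; norm_num
  have hu1 : 1 / √2 < 1 := by rw [div_lt_one (by positivity)]; nlinarith [Real.sqrt_nonneg 2]
  rw [div_eq_mul_one_div s]
  set u := 1 / √2
  have hu0 : 0 < u := by positivity
  rcases le_total u s with h | h
  · rw [max_eq_left (by linarith)]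
    nlinarith [mul_nonneg (sub_nonneg.2 h) (by linarith : 0 ≤ s + 2 * u)]
  · rw [max_eq_right (by linarith)]
    nlinarith [mul_nonneg (sub_nonneg.2 h) (by linarith : 0 ≤ 2 * s - u)]

lemma lt_one_sub_mul_sq {ζ s : ℝ} (hζ : ζ ≤ 1 / 100) (hs : s ≤ 1 / 2) :
    ζ < (1 - ζ) * (1 / √2 - max 0 s) ^ 2 := by
  have h2 : √2 ≤ 10 / 7 := by rw [Real.sqrt_le_left (by norm_num)]; norm_num
  have hinv : 7 / 10 ≤ 1 / √2 := by rw [le_div_iff₀ (by positivity)]; linarith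
  have hgap : 1 / 5 ≤ 1 / √2 - max 0 s := by linarith [max_le (by norm_num : (0:ℝ) ≤ 1 / 2) hs]
  nlinarith [pow_le_pow_left₀ (by norm_num) hgap 2]

end ScalarInequalities

lemma card_sub_sum_le_sum_sq {ι : Type*} (s : Finset ι) (f : ι → ℝ) :
    #s - ∑ i ∈ s, f i ≤ ∑ i ∈ s, (1 - 1 / 2 * f i) ^ 2 := by
  rw [← nsmul_one, ← sum_const, ← sum_sub_distrib]
  exact sum_le_sum fun i _ => by nlinarith [sq_nonneg (f i)]

section EndpointSum

variable {V : Type*}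

def endpointSum (f : V → ℝ) : Sym2 V → ℝ :=
  Sym2.lift ⟨fun u v => f u + f v, fun u v => add_comm (f u) (f v)⟩

@[simp] lemma endpointSum_mk (f : V → ℝ) (u v : V) : endpointSum f s(u, v) = f u + f v := rfl

end EndpointSum

namespace SimpleGraph

variable {V : Type*} [Fintype V] [DecidableEq V] (G : SimpleGraph V) [DecidableRel G.Adj]

lemma sum_edgeFinset_endpointSum (f : V → ℝ) :
    ∑ e ∈ G.edgeFinset, endpointSum f e = ∑ v, G.degree v * f v := by
  have hedge : ∀ e ∈ G.edgeFinset, endpointSum f e = ∑ v ∈ univ.filter (· ∈ e), f v := by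
    intro e he
    induction e with
    | _ a b =>
      have hab : a ≠ b := (G.mem_edgeFinset.1 he).ne
      have hfilter : univ.filter (· ∈ s(a, b)) = {a, b} := by ext; simp
      rw [hfilter, sum_pair hab, endpointSum_mk]
  rw [sum_congr rfl hedge]
  simp_rw [sum_filter]
  rw [sum_comm]
  refine sum_congr rfl fun v _ => ?_
  rw [← sum_filter, ← G.incidenceFinset_eq_filter, sum_const, G.card_incidenceFinset_eq_degree,
    nsmul_eq_mul]

variable {G}

lemma sum_endpointSum_le {S : Finset (Sym2 V)} (hS : S ⊆ G.edgeFinset) {f : V → ℝ}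
    (hf : ∀ v, 0 ≤ f v) {d : ℕ} (hdeg : ∀ v, G.degree v ≤ d) :
    ∑ e ∈ S, endpointSum f e ≤ d * ∑ v, f v := by
  calc ∑ e ∈ S, endpointSum f e ≤ ∑ e ∈ G.edgeFinset, endpointSum f e := by
        refine sum_le_sum_of_subset_of_nonneg hS fun e _ _ => ?_
        induction e with
        | _ a b => exact add_nonneg (hf a) (hf b)
    _ = ∑ v, G.degree v * f v := G.sum_edgeFinset_endpointSum f
    _ ≤ d * ∑ v, f v := by
        rw [mul_sum]
        exact sum_le_sum fun v _ => mul_le_mul_of_nonneg_right (by exact_mod_cast hdeg v) (hf v)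

variable (w : V → ℝ) {t : ℝ}

lemma sum_edges_notMem_sym2_le {d : ℕ} (hdeg : ∀ v, G.degree v ≤ d) :
    ∑ e ∈ G.edgeFinset.filter (· ∉ (univ.filter (1.2 * t ≤ w ·)).sym2),
        max 0 (endpointSum w e - 3.5 * t) ≤ d * ∑ v, max 0 (w v - 2.3 * t) := by
  refine (sum_le_sum fun e he => ?_).trans
    (sum_endpointSum_le (filter_subset _ _) (fun v => le_max_left 0 (w v - 2.3 * t)) hdeg)
  induction e with
  | _ a b =>
    refine max_zero_add_sub_le_of_le_or_le ?_
    by_contra! h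
    exact (mem_filter.1 he).2 (mk_mem_sym2_iff.2 ⟨by simp [h.1.le], by simp [h.2.le]⟩)

lemma mul_sum_edges_le {S : Finset (Sym2 V)} (hS : S ⊆ G.edgeFinset) (ht : 0 < t) {β : ℝ}
    (hβ : 0 ≤ β) {d : ℕ} (hd : 0 < d) (hdeg : ∀ v, G.degree v ≤ d) :
    β * ∑ e ∈ S, max 0 (endpointSum w e - 3.5 * t)
      ≤ ∑ v, max 0 (w v - 2 * t) ^ 2 / (8 * t) + #S * (β * t * (1 / 2 + 4 * β * d)) := by
  set z : V → ℝ := fun v => max 0 (w v - 2 * t)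
  have hdt : (0 : ℝ) < 2 * d * t := by positivity
  have hedge : ∀ e ∈ S, β * max 0 (endpointSum w e - 3.5 * t)
      ≤ endpointSum (fun v => z v ^ 2 / (8 * d * t)) e + β * t * (1 / 2 + 4 * β * d) := by
    intro e _
    induction e with
    | _ a b =>
      have hz := mul_le_mul_of_nonneg_left (max_zero_add_sub_le ht.le (w a) (w b)) hβ
      have ha := mul_le_sq_div_add_mul_sq hdt (z a) β
      have hb := mul_le_sq_div_add_mul_sq hdt (z b) β
      have hdiv : ∀ x : ℝ, x ^ 2 / (4 * (2 * d * t)) = x ^ 2 / (8 * d * t) := fun x => by ring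
      rw [hdiv] at ha hb
      simp only [endpointSum_mk]
      linear_combination hz + ha + hb
  calc β * ∑ e ∈ S, max 0 (endpointSum w e - 3.5 * t)
      ≤ ∑ e ∈ S, (endpointSum (fun v => z v ^ 2 / (8 * d * t)) e
          + β * t * (1 / 2 + 4 * β * d)) := by
        rw [mul_sum]; exact sum_le_sum hedge
    _ ≤ d * ∑ v, z v ^ 2 / (8 * d * t) + #S * (β * t * (1 / 2 + 4 * β * d)) := by
        rw [sum_add_distrib, sum_const, nsmul_eq_mul]
        gcongr
        exact sum_endpointSum_le hS (fun v => by positivity) hdeg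
    _ = ∑ v, z v ^ 2 / (8 * t) + #S * (β * t * (1 / 2 + 4 * β * d)) := by
        rw [mul_sum]
        congr 1
        refine sum_congr rfl fun v _ => ?_
        field_simp

lemma sum_activation_le (ht : 0 < t) {β : ℝ} (hβ : 0 ≤ β) {d : ℕ} (hd : 0 < d)
    (hβd : β * d ≤ 3 / 20) (hdeg : ∀ v, G.degree v ≤ d) :
    ∑ v, max 0 (w v - t) + β * ∑ e ∈ G.edgeFinset, max 0 (endpointSum w e - 3.5 * t)
      ≤ ∑ v, w v ^ 2 / (4 * t)
        + #(G.edgeFinset ∩ (univ.filter (1.2 * t ≤ w ·)).sym2) * (β * t * (1 / 2 + 4 * β * d)) := by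
  set H := univ.filter (1.2 * t ≤ w ·)
  have heavy := mul_sum_edges_le w (S := G.edgeFinset ∩ H.sym2) inter_subset_left ht hβ hd hdeg
  have light := mul_le_mul_of_nonneg_left (sum_edges_notMem_sym2_le w (t := t) hdeg) hβ
  have hvert : ∑ v, (max 0 (w v - t) + max 0 (w v - 2 * t) ^ 2 / (8 * t)
      + β * d * max 0 (w v - 2.3 * t)) ≤ ∑ v, w v ^ 2 / (4 * t) :=
    sum_le_sum fun v _ => max_zero_sub_add_le_sq_div ht hβd (w v)
  rw [sum_add_distrib, sum_add_distrib, ← mul_sum] at hvert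
  rw [← sum_filter_add_sum_filter_not G.edgeFinset (· ∈ H.sym2), filter_mem_eq_inter]
  linear_combination hvert + heavy + light

end SimpleGraph

lemma card_filter_mul_sq_le_sum_sq {V : Type*} [Fintype V] (w : V → ℝ) {a : ℝ} (ha : 0 ≤ a) :
    #(univ.filter (a ≤ w ·)) * a ^ 2 ≤ ∑ v, w v ^ 2 := by
  calc #(univ.filter (a ≤ w ·)) * a ^ 2 ≤ ∑ v ∈ univ.filter (a ≤ w ·), w v ^ 2 := by
        rw [← nsmul_eq_mul]
        exact card_nsmul_le_sum _ _ _ fun v hv => pow_le_pow_left₀ ha (mem_filter.1 hv).2 2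
    _ ≤ ∑ v, w v ^ 2 :=
        sum_le_sum_of_subset_of_nonneg (subset_univ _) fun v _ _ => sq_nonneg (w v)

section Parameters

variable {κ δ : ℝ}

lemma sum_sq_div_le (hδ : 0 < δ) (hκδ : 4 * κ * δ ^ 2 = 1) {W s : ℝ} (hs : 1 / 2 < s)
    (hW : W + s ^ 2 ≤ 1) :
    W / (4 * (δ * s)) ≤ κ * δ / √2 + 5 * κ * δ * max 0 (1 / √2 - s) := by
  rw [div_le_iff₀ (by positivity)]
  linear_combination hW + one_sub_sq_le hs - (s / √2 + 5 * s * max 0 (1 / √2 - s)) * hκδ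

lemma card_filter_le_thousand_mul {k : ℕ} (hδ : 0 < δ) (hκδ : 4 * k * δ ^ 2 = 1) {V : Type*}
    [Fintype V] {w : V → ℝ} {s : ℝ} (hs : 1 / 2 < s) (hw : ∑ v, w v ^ 2 + s ^ 2 ≤ 1) :
    #(univ.filter (1.2 * (δ * s) ≤ w ·)) ≤ 1000 * k := by
  suffices (#(univ.filter (1.2 * (δ * s) ≤ w ·)) : ℝ) ≤ 1000 * k by exact_mod_cast this
  have h := card_filter_mul_sq_le_sum_sq w (a := 1.2 * (δ * s)) (by positivity)
  set n : ℝ := (#(univ.filter (1.2 * (δ * s) ≤ w ·)) : ℝ)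
  have hn : 0 ≤ n := by positivity
  nlinarith [mul_le_mul_of_nonneg_left hs.le hn]

lemma mul_max_zero_le {c ζ N Δ : ℝ} (hc : 0 ≤ c) (hcN : c * N ≤ ζ) (hκN : κ ≤ N)
    (hκδ : 4 * κ * δ ^ 2 = 1) (hζ : ζ ≤ 1 / 10) :
    c * (5 * κ * δ * max 0 Δ) ≤ (1 - ζ) * Δ ^ 2 + c * (2 * ζ) := by
  have hamgm := mul_le_sq_div_add_mul_sq (by linarith : 0 < 1 - ζ) (5 * c * κ * δ) (max 0 Δ)
  have hsq : max 0 Δ ^ 2 ≤ Δ ^ 2 := by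
    rcases le_total Δ 0 with h | h <;> simp [h]
    positivity
  have hcκ : c * κ ≤ ζ := (mul_le_mul_of_nonneg_left hκN hc).trans hcN
  have hsq' : (5 * c * κ * δ) ^ 2 = 25 / 4 * c * (c * κ) := by
    linear_combination (25 / 4 * c ^ 2 * κ) * hκδ
  have hbound : (5 * c * κ * δ) ^ 2 / (4 * (1 - ζ)) ≤ c * (2 * ζ) := by
    rw [div_le_iff₀ (by linarith), hsq']
    nlinarith [mul_le_mul_of_nonneg_left hcκ hc, mul_nonneg hc (sub_nonneg.2 hζ)]
  linear_combination hamgm + hbound + mul_le_mul_of_nonneg_left hsq (by linarith : 0 ≤ 1 - ζ)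

lemma half_le_mul (hδ : 0 < δ) (hκ : 1 ≤ κ) (hκδ : 4 * κ * δ ^ 2 = 1) : 1 / 2 ≤ κ * δ := by
  nlinarith [sq_nonneg (κ * δ - 1 / 2)]

-- The edge term `β ℓδ / (4√2)` of `ζ - (OPT + ε)` absorbs both the slack `β t (1/2 + 4βd)` of
-- each of the `h < ℓ/1000` heavy edges and the cost `2ζ` left by `mul_max_zero_le`.
lemma slack_lt_edge_gain {ζ β t ℓ h d : ℝ} (hd : 0 < d) (hζ : ζ * d ^ 2 ≤ 1 / 10 ^ 10)
    (hβ : 1 / (500 * d ^ 2) ≤ β) (hβd : β * d ≤ 1 / 100) (ht : 0 < t) (htδ : t ≤ δ)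
    (hℓδ : 1 / 6 ≤ ℓ * δ) (hh : 0 ≤ h) (hhℓ : h < ℓ / 1000) :
    2 * ζ + h * (β * t * (1 / 2 + 4 * β * d)) < β * (ℓ * δ / (4 * √2)) := by
  have h2 : √2 ≤ 3 / 2 := by rw [Real.sqrt_le_left (by norm_num)]; norm_num
  have hδ : 0 < δ := ht.trans_le htδ
  have hβ0 : 0 < β := lt_of_lt_of_le (by positivity) hβ
  have hβd2 : 1 / 500 ≤ β * d ^ 2 := by
    rw [div_le_iff₀ (by positivity)] at hβ; linarith
  have hζβ : 2 * ζ ≤ 1 / 1000 * (β * (ℓ * δ)) := by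
    refine le_of_mul_le_mul_right ?_ (by positivity : 0 < d ^ 2)
    nlinarith [mul_le_mul hβd2 hℓδ (by norm_num) (by positivity)]
  have hedge : β * t * (1 / 2 + 4 * β * d) ≤ β * δ * (27 / 50) :=
    mul_le_mul (by gcongr) (by linarith) (by positivity) (by positivity)
  have hslack : h * (β * t * (1 / 2 + 4 * β * d)) ≤ ℓ / 1000 * (β * δ * (27 / 50)) :=
    mul_le_mul hhℓ.le hedge (by positivity) (by linarith)
  have hgap : ℓ * δ / 6 ≤ ℓ * δ / (4 * √2) :=
    div_le_div_of_nonneg_left (by linarith) (by positivity) (by linarith)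
  nlinarith [mul_le_mul_of_nonneg_left hgap hβ0.le]

end Parameters

theorem SimpleGraph.activation_lt {V : Type*} [Fintype V] [DecidableEq V] (G : SimpleGraph V)
    [DecidableRel G.Adj] {d κ : ℕ} {ℓ δ ζ c β : ℝ} (hd : 0 < d) (hdeg : ∀ v, G.degree v ≤ d)
    (hκN : (κ : ℝ) ≤ Fintype.card V) (hℓ : (κ : ℝ) / 3 ≤ ℓ)
    (hsound : ∀ T : Finset V, #T ≤ 1000 * κ → (#(G.edgeFinset ∩ T.sym2) : ℝ) < ℓ / 1000)
    (hδ : 0 < δ) (hκδ : 4 * κ * δ ^ 2 = 1) (hζd : ζ * d ^ 2 ≤ 1 / 10 ^ 10) (hc : 0 < c)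
    (hcN : c * Fintype.card V ≤ ζ) (hβ : 1 / (500 * d ^ 2) ≤ β) (hβd : β * d ≤ 1 / 100)
    {w : V → ℝ} {s : ℝ} (hw : ∑ v, w v ^ 2 + s ^ 2 ≤ 1) (hs : 1 / 2 < s) :
    c * ∑ v, max 0 (w v - δ * s)
        + c * β * ∑ e ∈ G.edgeFinset, max 0 (endpointSum w e - 3.5 * (δ * s))
      < (1 - ζ) * (1 / √2 - s) ^ 2 + c * (κ * δ / √2) + c * β * (ℓ * δ / (4 * √2)) := by
  have hκ : 1 ≤ κ := Nat.one_le_iff_ne_zero.2 fun h => by simp [h] at hκδ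
  have hd' : (1 : ℝ) ≤ d := by exact_mod_cast hd
  have hζ : ζ ≤ 1 / 10 := by nlinarith [mul_nonneg hc.le (Nat.cast_nonneg (Fintype.card V))]
  have hs1 : s ≤ 1 := by nlinarith [sum_nonneg fun v (_ : v ∈ univ) => sq_nonneg (w v)]
  have ht : 0 < δ * s := by positivity
  have hact :=
    G.sum_activation_le w ht (hβ.trans' (by positivity)) hd (hβd.trans (by norm_num)) hdeg
  rw [← sum_div] at hact
  have hheavy := hsound _ (card_filter_le_thousand_mul hδ hκδ hs hw)
  have hW := sum_sq_div_le hδ hκδ hs (W := ∑ v, w v ^ 2) (by linarith)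
  have hcost := mul_max_zero_le (Δ := 1 / √2 - s) hc.le hcN hκN hκδ hζ
  have hℓδ : 1 / 6 ≤ ℓ * δ := by
    linarith [mul_le_mul_of_nonneg_right hℓ hδ.le, half_le_mul hδ (by exact_mod_cast hκ) hκδ]
  have hslack := slack_lt_edge_gain (by positivity) hζd hβ hβd ht
    (mul_le_of_le_one_right hδ.le hs1) hℓδ (by positivity) hheavy
  have h1 := mul_le_mul_of_nonneg_left hact hc.le
  have h2 := mul_le_mul_of_nonneg_left hW hc.le
  have h3 := mul_lt_mul_of_pos_left hslack hc
  linear_combination h1 + h2 + h3 + hcost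

lemma edge_weight_ratio_bounds {d γ N M : ℝ} (hd : 1 ≤ d) (hγ : γ * d = 1 / 1000) (hM : 0 < M)
    (hMN : N / 5 ≤ M) (hNd : 2 * M ≤ d * N) :
    1 / (500 * d ^ 2) ≤ γ * N / ((1 - γ) * M) ∧ γ * N / ((1 - γ) * M) * d ≤ 1 / 100 := by
  have hγ0 : 0 < γ := by nlinarith
  have hγ1 : γ ≤ 1 / 1000 := by nlinarith
  constructor
  · rw [div_le_div_iff₀ (by positivity) (by nlinarith)]
    nlinarith [mul_le_mul_of_nonneg_right hγ0.le hM.le]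
  · rw [div_mul_eq_mul_div, div_le_iff₀ (by nlinarith)]
    nlinarith

theorem SimpleGraph.loss_gt {V : Type*} [Fintype V] [DecidableEq V] (G : SimpleGraph V)
    [DecidableRel G.Adj] {d κ : ℕ} {ℓ γ ζ δ : ℝ} (hd : 1 ≤ d) (hdeg : ∀ v, G.degree v ≤ d)
    (hM : 0 < #G.edgeFinset) (hMN : (Fintype.card V : ℝ) / 5 ≤ #G.edgeFinset)
    (hκN : κ ≤ Fintype.card V) (hℓ : (κ : ℝ) / 3 ≤ ℓ)
    (hsound : ∀ T : Finset V, #T ≤ 1000 * κ → (#(G.edgeFinset ∩ T.sym2) : ℝ) < ℓ / 1000)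
    (hδ : 0 < δ) (hκδ : 4 * κ * δ ^ 2 = 1) (hγ : γ * d = 1 / 1000) (hζ : 0 < ζ)
    (hζd : ζ * d ^ 2 = 1 / 10 ^ 10) {w : V → ℝ} {s : ℝ} (hw : ∑ v, w v ^ 2 + s ^ 2 ≤ 1) :
    ζ - (1 - γ) * ζ / Fintype.card V * (κ * δ / √2)
        - γ * ζ / #G.edgeFinset * (ℓ * δ / (4 * √2))
      < (1 - ζ) * (1 / √2 - max 0 s) ^ 2
        + (1 - γ) * ζ / Fintype.card V * ∑ v, (1 - 1 / 2 * max 0 (w v - δ * s)) ^ 2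
        + γ * ζ / #G.edgeFinset
          * ∑ e ∈ G.edgeFinset, (1 - 1 / 2 * max 0 (endpointSum w e - 3.5 * (δ * s))) ^ 2 := by
  have hκ : 1 ≤ κ := Nat.one_le_iff_ne_zero.2 fun h => by simp [h] at hκδ
  have hNd : 2 * #G.edgeFinset ≤ d * Fintype.card V := by
    simpa [← G.sum_degrees_eq_twice_card_edges, mul_comm] using
      sum_le_sum fun v (_ : v ∈ univ) => hdeg v
  have hd' : (1 : ℝ) ≤ d := by exact_mod_cast hd
  have hN : (0 : ℝ) < Fintype.card V := by exact_mod_cast hκ.trans hκN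
  have hM' : (0 : ℝ) < #G.edgeFinset := by exact_mod_cast hM
  have hγ' : 0 < 1 - γ := by nlinarith
  obtain ⟨hβ, hβd⟩ := edge_weight_ratio_bounds hd' hγ hM' hMN (by exact_mod_cast hNd)
  set c := (1 - γ) * ζ / Fintype.card V
  set β := γ * Fintype.card V / ((1 - γ) * #G.edgeFinset)
  have hc : 0 < c := by positivity
  have hβ0 : 0 ≤ β := le_trans (by positivity) hβ
  have hcβ : γ * ζ / #G.edgeFinset = c * β := by simp only [c, β]; field_simp
  have hweights : c * Fintype.card V + c * β * #G.edgeFinset = ζ := by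
    simp only [c, β]; field_simp; ring
  rw [hcβ]
  rcases le_or_gt s (1 / 2) with hs | hs
  · have hℓ : 0 ≤ ℓ := by linarith [div_nonneg (Nat.cast_nonneg κ : (0 : ℝ) ≤ κ) zero_le_three]
    have hcβ0 : 0 ≤ c * β := mul_nonneg hc.le hβ0
    have := lt_one_sub_mul_sq (ζ := ζ) (by nlinarith) hs
    have := mul_nonneg hc.le (by positivity : 0 ≤ κ * δ / √2)
    have := mul_nonneg hcβ0 (by positivity : 0 ≤ ℓ * δ / (4 * √2))
    have := mul_nonneg hc.le (by positivity : 0 ≤ ∑ v, (1 - 1 / 2 * max 0 (w v - δ * s)) ^ 2)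
    have := mul_nonneg hcβ0 (by positivity : 0 ≤ ∑ e ∈ G.edgeFinset,
      (1 - 1 / 2 * max 0 (endpointSum w e - 3.5 * (δ * s))) ^ 2)
    linarith
  · have hv := mul_le_mul_of_nonneg_left
      (card_sub_sum_le_sum_sq univ fun v => max 0 (w v - δ * s)) hc.le
    have he := mul_le_mul_of_nonneg_left
      (card_sub_sum_le_sum_sq G.edgeFinset fun e => max 0 (endpointSum w e - 3.5 * (δ * s)))
      (mul_nonneg hc.le hβ0)
    have hact := G.activation_lt (by omega) hdeg (by exact_mod_cast hκN) hℓ hsound hδ hκδ hζd.le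
      hc (by linarith [mul_nonneg (mul_nonneg hc.le hβ0) hM'.le]) hβ hβd hw hs
    rw [max_eq_right (by linarith)]
    rw [card_univ] at hv
    linear_combination hv + he + hact - hweights

lemma lift_eq_endpointSum {V : Type*} (w : V → ℝ) (a b : ℝ) (h) (e : Sym2 V) :
    Sym2.lift ⟨fun u v => (1 - a * max 0 (w u + w v - b)) ^ 2, h⟩ e
      = (1 - a * max 0 (endpointSum w e - b)) ^ 2 := by
  induction e with
  | _ u v => rfl

/-- Soundness of the Densest κ-Subgraph → bounded 1-ReLU training
reduction: if every set of at most `1000κ` vertices induces fewer than `ℓ/1000`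
edges, then every weight vector of norm at most 1 has loss more than `OPT + ε`. -/
theorem dks_reduction_soundness
    (V : Type*) [Fintype V] [DecidableEq V]
    (G : SimpleGraph V) [DecidableRel G.Adj]
    (d κ : ℕ) (ℓ : ℝ) (N M : ℕ)
    (hN : N = Fintype.card V) (hM : M = G.edgeFinset.card)
    (hM1 : 1 ≤ M) (hd : 1 ≤ d)
    (hdeg : ∀ v : V, G.degree v ≤ d)
    (hMN : (N : ℝ) / 5 ≤ (M : ℝ))
    (hκ2 : 2 ≤ κ) (hκN : κ ≤ N)
    (hℓlo : (κ : ℝ) / 3 ≤ ℓ)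
    (hsound : ∀ T : Finset V, T.card ≤ 1000 * κ →
      ((G.edgeFinset ∩ T.sym2).card : ℝ) < ℓ / 1000) :
    let δ : ℝ := 1 / (2 * Real.sqrt κ)
    let γ : ℝ := 1 / (1000 * (d : ℝ))
    let ζ : ℝ := 1 / (10 ^ 10 * (d : ℝ) ^ 2)
    let OPT : ℝ := (1 - γ) * ζ * (1 - (κ : ℝ) * δ / (Real.sqrt 2 * N) + (κ : ℝ) * δ ^ 2 / (8 * N))
      + γ * ζ * (1 - ℓ * δ / (2 * Real.sqrt 2 * M) + ℓ * δ ^ 2 / (32 * M))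
    let ε : ℝ := γ * ζ * ℓ * δ / (4 * Real.sqrt 2 * M)
      - (1 - γ) * ζ * (κ : ℝ) * δ ^ 2 / (8 * N) - γ * ζ * ℓ * δ ^ 2 / (32 * M)
    ∀ (w : V → ℝ) (ws : ℝ), (∑ v : V, (w v) ^ 2) + ws ^ 2 ≤ 1 →
      (1 - ζ) * (1 / Real.sqrt 2 - max 0 ws) ^ 2
        + ((1 - γ) * ζ / N) * ∑ v : V, (1 - (1 / 2) * max 0 (w v - δ * ws)) ^ 2
        + (γ * ζ / M) * ∑ e ∈ G.edgeFinset,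
            Sym2.lift ⟨fun u v => (1 - (1 / 2) * max 0 (w u + w v - 3.5 * δ * ws)) ^ 2,
              by intro a b; dsimp only; rw [add_comm (w a) (w b)]⟩ e
        > OPT + ε := by
  intro δ γ ζ OPT ε w ws hw
  subst hN hM
  have hκ : (0 : ℝ) < κ := by exact_mod_cast (by omega : 0 < κ)
  have hN : (0 : ℝ) < Fintype.card V := by exact_mod_cast (by omega : 0 < Fintype.card V)
  have hM : (0 : ℝ) < #G.edgeFinset := by exact_mod_cast hM1
  have hd' : (0 : ℝ) < d := by exact_mod_cast hd
  have hκδ : 4 * κ * δ ^ 2 = 1 := by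
    simp only [δ]; rw [div_pow, mul_pow, Real.sq_sqrt hκ.le]; field_simp; norm_num
  have hOPT : OPT + ε = ζ - (1 - γ) * ζ / Fintype.card V * (κ * δ / √2)
      - γ * ζ / #G.edgeFinset * (ℓ * δ / (4 * √2)) := by
    simp only [OPT, ε]; field_simp; ring
  simp only [lift_eq_endpointSum, mul_assoc 3.5 δ ws]
  rw [gt_iff_lt, hOPT]
  exact G.loss_gt hd hdeg hM1 hMN hκN hℓlo hsound (by positivity) hκδ
    (by simp only [γ]; field_simp) (by positivity) (by simp only [ζ]; field_simp) hw
end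

section
/- Let k ≥ 2 and t ≥ 1 be integers, let G = (V,E) be a finite hypergraph with n = |V| ≥ 1 vertices in which every hyperedge e ∈ E satisfies |e| ≤ t, and let χ: V → {1,…,k} be a proper k-coloring of G (i.e., for every e ∈ E there exist i, j ∈ e with χ(i) ≠ χ(j)). For each a ∈ {1,…,k} define w^a ∈ ℝ^V by w^a_i = 1/(t·√(t·n)) if χ(i) = a and w^a_i = −1/√n otherwise. Then: (i) ‖w^a‖₂ ≤ 1 for every a; (ii) for every vertex i ∈ V: Σ_{a=1}^{k} max(0, w^a_i) = 1/(t·√(t·n)); and (iii) for every hyperedge e ∈ E: Σ_{a=1}^{k} max(0, (1/√t)·Σ_{i∈e} w^a_i) = 0. -/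
/-!
Each vertex gives the positive weight `c = 1/(t√(tn))` only to the neuron of its own color and
`-1/√n` to every other neuron, so every vertex sample sees exactly `c`, and both weights square to
at most `1/n`. A properly colored hyperedge of size at most `t` has, for every color `a`, a vertex
of another color, whose `-1/√n` outweighs the at most `t` contributions `c` since
`t * c = 1/√(tn) ≤ 1/√n`.
-/

open Finset

section ColorWeight

variable {V κ : Type*} [DecidableEq κ]

def colorWeight (χ : V → κ) (p q : ℝ) (a : κ) (i : V) : ℝ :=
  if χ i = a then p else q

variable (χ : V → κ) {p q : ℝ}

lemma sum_max_zero_colorWeight [Fintype κ] (hp : 0 ≤ p) (hq : q ≤ 0) (i : V) :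
    ∑ a : κ, max 0 (colorWeight χ p q a i) = p := by
  rw [sum_eq_single (χ i)]
  · simp [colorWeight, hp]
  · intro b _ hb
    simp [colorWeight, Ne.symm hb, hq]
  · simp

lemma colorWeight_sq_le {r : ℝ} (hp : p ^ 2 ≤ r) (hq : q ^ 2 ≤ r) (a : κ) (i : V) :
    colorWeight χ p q a i ^ 2 ≤ r := by
  unfold colorWeight
  split_ifs <;> assumption

lemma colorWeight_le (hqp : q ≤ p) (a : κ) (i : V) : colorWeight χ p q a i ≤ p := by
  unfold colorWeight
  split_ifs
  exacts [le_rfl, hqp]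

lemma sum_colorWeight_nonpos [DecidableEq V] {e : Finset V} {t : ℕ} (he : #e ≤ t) {a : κ} {j : V} (hj : j ∈ e)
    (hja : χ j ≠ a) (hp : 0 ≤ p) (hq : q ≤ 0) (htpq : t * p + q ≤ 0) :
    ∑ i ∈ e, colorWeight χ p q a i ≤ 0 := by
  rw [← add_sum_erase e _ hj]
  have hwj : colorWeight χ p q a j = q := if_neg hja
  have hrest : ∑ i ∈ e.erase j, colorWeight χ p q a i ≤ t * p :=
    calc ∑ i ∈ e.erase j, colorWeight χ p q a i
        ≤ #(e.erase j) • p := sum_le_card_nsmul _ _ _ fun i _ => colorWeight_le χ (hq.trans hp) a i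
      _ ≤ t * p := by
        rw [nsmul_eq_mul]
        gcongr
        exact_mod_cast (card_erase_le).trans he
  linarith

end ColorWeight

lemma exists_mem_ne_of_exists_ne {V κ : Type*} {χ : V → κ} {e : Finset V}
    (h : ∃ i ∈ e, ∃ j ∈ e, χ i ≠ χ j) (a : κ) : ∃ j ∈ e, χ j ≠ a := by
  obtain ⟨i, hi, j, hj, hij⟩ := h
  by_cases hia : χ i = a
  · exact ⟨j, hj, hia ▸ hij.symm⟩
  · exact ⟨i, hi, hia⟩

lemma sqrt_sum_sq_le_one {V : Type*} [Fintype V] {x : V → ℝ}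
    (hx : ∀ i, x i ^ 2 ≤ 1 / Fintype.card V) : √(∑ i, x i ^ 2) ≤ 1 := by
  rw [Real.sqrt_le_one]
  calc ∑ i, x i ^ 2 ≤ Fintype.card V • (1 / (Fintype.card V : ℝ)) :=
        sum_le_card_nsmul _ _ _ fun i _ => hx i
    _ ≤ 1 := by
      rw [nsmul_eq_mul, mul_one_div]
      exact div_self_le_one _

section Constants

variable {t n : ℝ}

lemma sq_one_div_mul_sqrt_le (ht : 1 ≤ t) (hn : 0 < n) : (1 / (t * √(t * n))) ^ 2 ≤ 1 / n := by
  rw [div_pow, mul_pow, Real.sq_sqrt (by positivity), one_pow]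
  gcongr
  nlinarith [mul_le_mul_of_nonneg_right (one_le_pow₀ ht : 1 ≤ t ^ 3) hn.le]

lemma sq_neg_one_div_sqrt (hn : 0 ≤ n) : (-1 / √n) ^ 2 = 1 / n := by
  rw [neg_div, neg_sq, div_pow, one_pow, Real.sq_sqrt hn]

lemma mul_one_div_mul_sqrt_le (ht : 1 ≤ t) (hn : 0 < n) : t * (1 / (t * √(t * n))) ≤ 1 / √n := by
  rw [mul_one_div, div_mul_cancel_left₀ (by positivity), one_div]
  gcongr
  nlinarith

end Constants

theorem coloring_reduction_completeness_general
    (V : Type*) [Fintype V] [DecidableEq V]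
    (k t : ℕ) (ht : 1 ≤ t)
    (E : Finset (Finset V)) (hE : ∀ e ∈ E, e.card ≤ t)
    (n : ℕ) (hn : n = Fintype.card V) (hn1 : 1 ≤ n)
    (χ : V → Fin k)
    (hproper : ∀ e ∈ E, ∃ i ∈ e, ∃ j ∈ e, χ i ≠ χ j) :
    let w : Fin k → V → ℝ := fun a i =>
      if χ i = a then 1 / ((t : ℝ) * Real.sqrt ((t : ℝ) * n)) else -1 / Real.sqrt n
    (∀ a : Fin k, Real.sqrt (∑ i : V, (w a i) ^ 2) ≤ 1) ∧
    (∀ i : V, ∑ a : Fin k, max 0 (w a i) = 1 / ((t : ℝ) * Real.sqrt ((t : ℝ) * n))) ∧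
    (∀ e ∈ E, ∑ a : Fin k, max 0 ((1 / Real.sqrt t) * ∑ i ∈ e, w a i) = 0) := by
  intro w
  have htR : (1 : ℝ) ≤ t := by exact_mod_cast ht
  have hnR : (0 : ℝ) < n := by exact_mod_cast hn1
  set c : ℝ := 1 / ((t : ℝ) * √((t : ℝ) * n))
  have hc : 0 ≤ c := by positivity
  have hq : -1 / √(n : ℝ) ≤ 0 := div_nonpos_of_nonpos_of_nonneg (by norm_num) (by positivity)
  refine ⟨fun a => sqrt_sum_sq_le_one fun i => ?_,
    sum_max_zero_colorWeight χ hc hq, fun e he => sum_eq_zero fun a _ => max_eq_left ?_⟩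
  · rw [← hn]
    exact colorWeight_sq_le χ (sq_one_div_mul_sqrt_le htR hnR) (sq_neg_one_div_sqrt hnR.le).le a i
  · obtain ⟨j, hj, hja⟩ := exists_mem_ne_of_exists_ne (hproper e he) a
    have htc : (t : ℝ) * c + -1 / √(n : ℝ) ≤ 0 := by
      rw [neg_div]
      linarith [mul_one_div_mul_sqrt_le htR hnR]
    exact mul_nonpos_of_nonneg_of_nonpos (by positivity)
      (sum_colorWeight_nonpos χ (hE e he) hj hja hc hq htc)

/-- Completeness of the hypergraph k-coloring → sum-of-k-ReLUs
training reduction: a proper k-coloring yields bounded weight vectors realizing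
all vertex and hyperedge samples. -/
theorem coloring_reduction_completeness
    (V : Type*) [Fintype V] [DecidableEq V]
    (k t : ℕ) (hk : 2 ≤ k) (ht : 1 ≤ t)
    (E : Finset (Finset V)) (hE : ∀ e ∈ E, e.card ≤ t)
    (n : ℕ) (hn : n = Fintype.card V) (hn1 : 1 ≤ n)
    (χ : V → Fin k)
    (hproper : ∀ e ∈ E, ∃ i ∈ e, ∃ j ∈ e, χ i ≠ χ j) :
    let w : Fin k → V → ℝ := fun a i =>
      if χ i = a then 1 / ((t : ℝ) * Real.sqrt ((t : ℝ) * n)) else -1 / Real.sqrt n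
    (∀ a : Fin k, Real.sqrt (∑ i : V, (w a i) ^ 2) ≤ 1) ∧
    (∀ i : V, ∑ a : Fin k, max 0 (w a i) = 1 / ((t : ℝ) * Real.sqrt ((t : ℝ) * n))) ∧
    (∀ e ∈ E, ∑ a : Fin k, max 0 ((1 / Real.sqrt t) * ∑ i ∈ e, w a i) = 0) :=
  coloring_reduction_completeness_general V k t ht E hE n hn hn1 χ hproper
end

section
/- Let k ≥ 2 and t ≥ 2 be integers, let G = (V,E) be a finite hypergraph with n = |V| ≥ 1 vertices and M = |E| ≥ 1 hyperedges, where every e ∈ E satisfies 2 ≤ |e| ≤ t. For i ∈ V let deg(i) = |{e ∈ E : i ∈ e}| and let m = Σ_{i∈V} deg(i) + M. Let γ ∈ (0,1] and suppose that every coloring χ: V → {1,…,k} makes at least γ·M hyperedges monochromatic. Then for all w¹,…,w^k ∈ ℝ^V: (1/m)·[ Σ_{i∈V} deg(i)·(1/(t·√(t·n)) − Σ_{a=1}^{k} max(0, w^a_i))² + Σ_{e∈E} (Σ_{a=1}^{k} max(0, (1/√t)·Σ_{i∈e} w^a_i))² ] > γ/(100·k²·t⁵·n). -/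
/-!
Colour each vertex by a ReLU of largest weight there. Double counting redistributes the vertex
samples over the hyperedges, so the training loss is a sum of per-hyperedge losses. On a
monochromatic hyperedge of colour `a`, look at the vertex `i` where `w^a` is smallest. If
`w^a_i > 0` then `w^a` is positive on the whole hyperedge, so in any case the edge output is at
least `[w^a_i]₊ / √t ≥ s / (k √t)`, where `s = Σ_b [w^b_i]₊` is the output on the vertex sample
of `i`. Hence the hyperedge loses at least `(δ - s)² + (s / (k √t))² ≥ δ² / (2 k² t)`, with
`δ = 1 / (t √(t n))`. Summing over the `≥ γ M` monochromatic hyperedges and using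
`m ≤ (t + 1) M` gives the bound.
-/

open Finset

section DoubleCounting

variable {V β : Type*} [Fintype V] [DecidableEq V]

theorem sum_card_filter_mem_nsmul [AddCommMonoid β] (E : Finset (Finset V)) (f : V → β) :
    ∑ i, #{e ∈ E | i ∈ e} • f i = ∑ e ∈ E, ∑ i ∈ e, f i := by
  simp_rw [← sum_const, sum_filter]
  rw [sum_comm]
  simp_rw [sum_ite_mem, univ_inter]

theorem sum_card_filter_mem_le_mul {E : Finset (Finset V)} {t : ℕ} (h : ∀ e ∈ E, #e ≤ t) :
    ∑ i, #{e ∈ E | i ∈ e} ≤ t * #E :=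
  calc ∑ i, #{e ∈ E | i ∈ e} = ∑ e ∈ E, #e := by
        simpa using sum_card_filter_mem_nsmul E (1 : V → ℕ)
    _ ≤ #E • t := sum_le_card_nsmul _ _ _ h
    _ = t * #E := by rw [smul_eq_mul, mul_comm]

end DoubleCounting

section ReLU

variable {ι : Type*}

theorem sum_max_zero_le_card_mul [Fintype ι] {f : ι → ℝ} {a₀ : ι} (h : ∀ a, f a ≤ f a₀) :
    ∑ a, max 0 (f a) ≤ Fintype.card ι * max 0 (f a₀) := by
  simpa using sum_le_card_nsmul univ (fun a => max 0 (f a)) _ fun a _ => max_le_max le_rfl (h a)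

theorem max_zero_le_max_zero_sum {s : Finset ι} {f : ι → ℝ} {i₀ : ι} (hi₀ : i₀ ∈ s)
    (h : ∀ i ∈ s, f i₀ ≤ f i) : max 0 (f i₀) ≤ max 0 (∑ i ∈ s, f i) := by
  rcases le_total (f i₀) 0 with hneg | hpos
  · simp [max_eq_left hneg]
  · exact max_le_max le_rfl (single_le_sum (fun i hi => hpos.trans (h i hi)) hi₀)

end ReLU

theorem mul_sq_div_two_le (δ s : ℝ) {c : ℝ} (hc0 : 0 ≤ c) (hc1 : c ≤ 1) :
    c * δ ^ 2 / 2 ≤ (δ - s) ^ 2 + c * s ^ 2 := by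
  nlinarith [mul_nonneg hc0 (sq_nonneg (δ - 2 * s)),
    mul_nonneg (sub_nonneg.2 hc1) (sq_nonneg (δ - s))]

section Loss

variable {ι V : Type*} [Fintype ι]

/-- Vertex `i` contributes its sample once to each hyperedge containing it, which accounts for
its multiplicity `deg i` in the training set. -/
def edgeLoss (w : ι → V → ℝ) (r δ : ℝ) (e : Finset V) : ℝ :=
  ∑ i ∈ e, (δ - ∑ a, max 0 (w a i)) ^ 2 + (∑ a, max 0 (r * ∑ i ∈ e, w a i)) ^ 2

theorem edgeLoss_nonneg (w : ι → V → ℝ) (r δ : ℝ) (e : Finset V) : 0 ≤ edgeLoss w r δ e := by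
  unfold edgeLoss; positivity

theorem le_edgeLoss_of_monochromatic {w : ι → V → ℝ} {χ : V → ι} (hχ : ∀ i a, w a i ≤ w (χ i) i)
    {e : Finset V} (he : e.Nonempty) (hmono : ∀ i ∈ e, ∀ j ∈ e, χ i = χ j)
    {r : ℝ} (hr0 : 0 ≤ r) (hr : r ≤ Fintype.card ι) (δ : ℝ) :
    (r / Fintype.card ι) ^ 2 * δ ^ 2 / 2 ≤ edgeLoss w r δ e := by
  obtain ⟨j, hj⟩ := he
  obtain ⟨i₀, hi₀, hmin⟩ := e.exists_min_image (w (χ j)) ⟨j, hj⟩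
  have hk : (0 : ℝ) < Fintype.card ι := by
    have : Nonempty ι := ⟨χ j⟩
    exact_mod_cast Fintype.card_pos
  set k : ℝ := (Fintype.card ι : ℝ)
  set s := ∑ a, max 0 (w a i₀)
  set u := max 0 (w (χ j) i₀)
  have hs : s ≤ k * u := by
    have := sum_max_zero_le_card_mul (hχ i₀)
    rwa [hmono i₀ hi₀ j hj] at this
  have hu : r * u ≤ ∑ a, max 0 (r * ∑ i ∈ e, w a i) :=
    calc r * u ≤ r * max 0 (∑ i ∈ e, w (χ j) i) :=
          mul_le_mul_of_nonneg_left (max_zero_le_max_zero_sum hi₀ hmin) hr0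
      _ = max 0 (r * ∑ i ∈ e, w (χ j) i) := by rw [mul_max_of_nonneg _ _ hr0, mul_zero]
      _ ≤ ∑ a, max 0 (r * ∑ i ∈ e, w a i) :=
          single_le_sum (f := fun a => max 0 (r * ∑ i ∈ e, w a i))
            (fun a _ => le_max_left _ _) (mem_univ _)
  have hvertex : (δ - s) ^ 2 ≤ ∑ i ∈ e, (δ - ∑ a, max 0 (w a i)) ^ 2 :=
    single_le_sum (f := fun i => (δ - ∑ a, max 0 (w a i)) ^ 2) (fun _ _ => sq_nonneg _) hi₀
  have hedge : (r / k) ^ 2 * s ^ 2 ≤ (∑ a, max 0 (r * ∑ i ∈ e, w a i)) ^ 2 := by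
    rw [← mul_pow]
    refine pow_le_pow_left₀ (by positivity) (le_trans ?_ hu) 2
    rw [div_mul_eq_mul_div, div_le_iff₀ hk]
    nlinarith
  calc (r / k) ^ 2 * δ ^ 2 / 2 ≤ (δ - s) ^ 2 + (r / k) ^ 2 * s ^ 2 :=
        mul_sq_div_two_le δ s (by positivity) (pow_le_one₀ (by positivity) ((div_le_one hk).2 hr))
    _ ≤ edgeLoss w r δ e := add_le_add hvertex hedge

theorem card_monochromatic_mul_le_loss [DecidableEq ι] [Fintype V] [DecidableEq V]
    {E : Finset (Finset V)} (hE : ∀ e ∈ E, e.Nonempty) {w : ι → V → ℝ} {χ : V → ι}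
    (hχ : ∀ i a, w a i ≤ w (χ i) i) {r : ℝ} (hr0 : 0 ≤ r) (hr : r ≤ Fintype.card ι) (δ : ℝ) :
    #{e ∈ E | ∀ i ∈ e, ∀ j ∈ e, χ i = χ j} * ((r / Fintype.card ι) ^ 2 * δ ^ 2 / 2) ≤
      ∑ i, (#{e ∈ E | i ∈ e} : ℝ) * (δ - ∑ a, max 0 (w a i)) ^ 2 +
        ∑ e ∈ E, (∑ a, max 0 (r * ∑ i ∈ e, w a i)) ^ 2 := by
  have hvertices := sum_card_filter_mem_nsmul E fun i => (δ - ∑ a, max 0 (w a i)) ^ 2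
  simp only [nsmul_eq_mul] at hvertices
  rw [hvertices, ← sum_add_distrib]
  calc _ = ∑ e ∈ E with ∀ i ∈ e, ∀ j ∈ e, χ i = χ j, (r / Fintype.card ι) ^ 2 * δ ^ 2 / 2 := by
        rw [sum_const, nsmul_eq_mul]
    _ ≤ ∑ e ∈ E with ∀ i ∈ e, ∀ j ∈ e, χ i = χ j, edgeLoss w r δ e := sum_le_sum fun e he =>
        le_edgeLoss_of_monochromatic hχ (hE e (mem_filter.1 he).1) (mem_filter.1 he).2 hr0 hr δ
    _ ≤ ∑ e ∈ E, edgeLoss w r δ e :=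
        sum_le_sum_of_subset_of_nonneg (filter_subset _ _) fun e _ _ => edgeLoss_nonneg w r δ e

end Loss

theorem coloring_reduction_soundness_general
    (V : Type*) [Fintype V] [DecidableEq V]
    (k t : ℕ) (hk : 2 ≤ k) (ht : 2 ≤ t)
    (E : Finset (Finset V)) (hcard : ∀ e ∈ E, 2 ≤ e.card ∧ e.card ≤ t)
    (n M : ℕ) (hn1 : 1 ≤ n)
    (hM : M = E.card) (hM1 : 1 ≤ M)
    (deg : V → ℕ) (hdeg : ∀ i : V, deg i = (E.filter (fun e => i ∈ e)).card)
    (m : ℕ) (hm : m = (∑ i : V, deg i) + M)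
    (γ : ℝ) (hγ0 : 0 < γ)
    (hmono : ∀ χ : V → Fin k,
      γ * (M : ℝ) ≤ ((E.filter (fun e => ∀ i ∈ e, ∀ j ∈ e, χ i = χ j)).card : ℝ)) :
    ∀ w : Fin k → V → ℝ,
      (1 / (m : ℝ)) *
        ((∑ i : V, (deg i : ℝ) *
            (1 / ((t : ℝ) * Real.sqrt ((t : ℝ) * n)) - ∑ a : Fin k, max 0 (w a i)) ^ 2)
          + ∑ e ∈ E, (∑ a : Fin k, max 0 ((1 / Real.sqrt t) * ∑ i ∈ e, w a i)) ^ 2)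
        > γ / (100 * (k : ℝ) ^ 2 * (t : ℝ) ^ 5 * (n : ℝ)) := by
  intro w
  have : NeZero k := ⟨by omega⟩
  choose χ hχ using fun i => Finite.exists_max (w · i)
  have hkR : (1 : ℝ) ≤ k := by exact_mod_cast (by omega : 1 ≤ k)
  have htR : (1 : ℝ) ≤ t := by exact_mod_cast (by omega : 1 ≤ t)
  have hr : 1 / √(t : ℝ) ≤ Fintype.card (Fin k) := by
    rw [Fintype.card_fin, div_le_iff₀ (by positivity)]
    nlinarith [Real.one_le_sqrt.2 htR]
  have hloss := card_monochromatic_mul_le_loss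
    (fun e he => card_pos.1 (by have := (hcard e he).1; omega)) hχ (by positivity) hr
    (1 / ((t : ℝ) * √((t : ℝ) * n)))
  have hc : (1 / √(t : ℝ) / Fintype.card (Fin k)) ^ 2 * (1 / ((t : ℝ) * √((t : ℝ) * n))) ^ 2 / 2
      = 1 / (2 * (k : ℝ) ^ 2 * (t : ℝ) ^ 4 * n) := by
    simp only [Fintype.card_fin, div_pow, one_pow, mul_pow]
    rw [Real.sq_sqrt (by positivity), Real.sq_sqrt (by positivity)]
    field_simp
  simp only [hc, ← hdeg] at hloss
  have hsize : m ≤ (t + 1) * M := by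
    have := sum_card_filter_mem_le_mul fun e he => (hcard e he).2
    simp only [← hdeg, ← hM] at this
    rw [hm, add_one_mul]
    omega
  have hm0 : (0 : ℝ) < m := by exact_mod_cast (by omega : 0 < m)
  rw [gt_iff_lt, one_div_mul_eq_div, lt_div_iff₀ hm0]
  calc γ / (100 * (k : ℝ) ^ 2 * (t : ℝ) ^ 5 * n) * m
      ≤ γ / (100 * (k : ℝ) ^ 2 * (t : ℝ) ^ 5 * n) * ((t + 1) * M) := by
        gcongr
        exact_mod_cast hsize
    _ = γ * M * (1 / (2 * (k : ℝ) ^ 2 * (t : ℝ) ^ 4 * n)) * ((t + 1) / (50 * t)) := by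
        field_simp
        ring
    _ < γ * M * (1 / (2 * (k : ℝ) ^ 2 * (t : ℝ) ^ 4 * n)) :=
        mul_lt_of_lt_one_right (by positivity) ((div_lt_one (by positivity)).2 (by linarith))
    _ ≤ _ := (mul_le_mul_of_nonneg_right (hmono χ) (by positivity)).trans hloss

/-- Soundness of the hypergraph k-coloring → sum-of-k-ReLUs training
reduction: if every k-coloring leaves at least a `γ` fraction of hyperedges
monochromatic, then every sum of k ReLUs incurs average squared training error
more than `γ/(100·k²·t⁵·n)`. -/
theorem coloring_reduction_soundness
    (V : Type*) [Fintype V] [DecidableEq V]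
    (k t : ℕ) (hk : 2 ≤ k) (ht : 2 ≤ t)
    (E : Finset (Finset V)) (hcard : ∀ e ∈ E, 2 ≤ e.card ∧ e.card ≤ t)
    (n M : ℕ) (hn : n = Fintype.card V) (hn1 : 1 ≤ n)
    (hM : M = E.card) (hM1 : 1 ≤ M)
    (deg : V → ℕ) (hdeg : ∀ i : V, deg i = (E.filter (fun e => i ∈ e)).card)
    (m : ℕ) (hm : m = (∑ i : V, deg i) + M)
    (γ : ℝ) (hγ0 : 0 < γ) (hγ1 : γ ≤ 1)
    (hmono : ∀ χ : V → Fin k,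
      γ * (M : ℝ) ≤ ((E.filter (fun e => ∀ i ∈ e, ∀ j ∈ e, χ i = χ j)).card : ℝ)) :
    ∀ w : Fin k → V → ℝ,
      (1 / (m : ℝ)) *
        ((∑ i : V, (deg i : ℝ) *
            (1 / ((t : ℝ) * Real.sqrt ((t : ℝ) * n)) - ∑ a : Fin k, max 0 (w a i)) ^ 2)
          + ∑ e ∈ E, (∑ a : Fin k, max 0 ((1 / Real.sqrt t) * ∑ i ∈ e, w a i)) ^ 2)
        > γ / (100 * (k : ℝ) ^ 2 * (t : ℝ) ^ 5 * (n : ℝ)) :=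
  coloring_reduction_soundness_general V k t hk ht E hcard n M hn1 hM hM1 deg hdeg m hm γ hγ0 hmono
end

section
/- For every integer k ≥ 1 there exist an integer m̃ ≥ 1, vectors x̃_1,…,x̃_{m̃} ∈ ℝ^k with ‖x̃_i‖₂ ≤ 1, labels ỹ_1,…,ỹ_{m̃} ∈ [0, k], and a real number τ > 0 such that: (i) (Completeness) there exist w̃¹,…,w̃^k ∈ ℝ^k with ‖w̃^j‖₂ ≤ 1 for all j and Σ_{j=1}^{k} max(0, w̃^j·x̃_i) = ỹ_i for every i ∈ {1,…,m̃}; and (ii) (Soundness) for all w̃¹,…,w̃^k ∈ ℝ^k and every a ∈ {−1,1}^k with a ≠ (1,…,1): (1/m̃)·Σ_{i=1}^{m̃} (Σ_{j=1}^{k} a_j·max(0, w̃^j·x̃_i) − ỹ_i)² ≥ τ. -/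
/-!
On the line `t ↦ (t, 1/2, 0, …, 0)` every ReLU `x ↦ max 0 (w ⬝ᵥ x)` becomes `t ↦ max 0 (c t + e)`.
The labels come from `k` such ReLUs with slope `1/2` and kinks at `2jδ`, `δ = 1/(4k)`, sampled
at the three points `p - δ, p, p + δ` of the window around each kink.

The ReLU of an affine function is convex, and its second difference over a window is positive
only if its kink lies strictly inside the window. The windows are disjoint, so the fewer than `k`
ReLUs with coefficient `+1` make the second difference positive on fewer than `k` windows, while
those with coefficient `-1` only lower it. Hence on some window the network has nonpositive second
difference, whereas the labels have second difference `δ/2` there. As the second difference is the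
functional `(1, -2, 1)` on the three values, Cauchy–Schwarz bounds the squared error on that window
from below by `(δ/2)² / 6`.
-/

open Finset

namespace ReLUGadget

def secondDiff (p d : ℝ) : (ℝ → ℝ) →ₗ[ℝ] ℝ :=
  LinearMap.proj (p - d) - 2 • LinearMap.proj p + LinearMap.proj (p + d)

@[simp]
lemma secondDiff_apply (p d : ℝ) (f : ℝ → ℝ) :
    secondDiff p d f = f (p - d) - 2 * f p + f (p + d) := by
  simp [secondDiff]

lemma secondDiff_sum {ι : Type*} (s : Finset ι) (F : ι → ℝ → ℝ) (p d : ℝ) :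
    secondDiff p d (fun t => ∑ j ∈ s, F j t) = ∑ j ∈ s, secondDiff p d (F j) := by
  rw [← map_sum, Finset.sum_fn]

lemma secondDiff_const_mul (a : ℝ) (f : ℝ → ℝ) (p d : ℝ) :
    secondDiff p d (fun t => a * f t) = a * secondDiff p d f :=
  map_smul (secondDiff p d) a f

def window (p d : ℝ) : Fin 3 → ℝ := ![p - d, p, p + d]

lemma window_mem_Icc (p : ℝ) {d : ℝ} (hd : 0 ≤ d) (r : Fin 3) :
    window p d r ∈ Set.Icc (p - d) (p + d) := by
  fin_cases r <;> simp [window, hd, add_assoc]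

lemma sq_secondDiff_le (p d : ℝ) (h : ℝ → ℝ) :
    secondDiff p d h ^ 2 ≤ 6 * ∑ r, h (window p d r) ^ 2 := by
  simp only [secondDiff_apply, Fin.sum_univ_three, window, Matrix.cons_val_zero,
    Matrix.cons_val_one, Matrix.cons_val_two, Matrix.tail_cons, Matrix.head_cons]
  nlinarith [sq_nonneg (2 * h (p - d) + h p), sq_nonneg (h (p - d) - h (p + d)),
    sq_nonneg (h p + 2 * h (p + d))]

lemma two_mul_max_zero_midpoint_le (u v : ℝ) :
    2 * max 0 ((u + v) / 2) ≤ max 0 u + max 0 v := by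
  rcases le_total 0 ((u + v) / 2) with h | h
  · rw [max_eq_right h]; linarith [le_max_right 0 u, le_max_right 0 v]
  · rw [max_eq_left h]; linarith [le_max_left 0 u, le_max_left 0 v]

lemma mul_neg_of_two_mul_max_zero_midpoint_lt {u v : ℝ}
    (h : 2 * max 0 ((u + v) / 2) < max 0 u + max 0 v) : u * v < 0 := by
  by_contra! huv
  rcases mul_nonneg_iff.mp huv with ⟨hu, hv⟩ | ⟨hu, hv⟩
  · rw [max_eq_right hu, max_eq_right hv, max_eq_right (by linarith)] at h; linarith
  · rw [max_eq_left hu, max_eq_left hv, max_eq_left (by linarith)] at h; linarith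

lemma secondDiff_relu_eq (c e p d : ℝ) :
    secondDiff p d (fun t => max 0 (c * t + e)) =
      max 0 (c * (p - d) + e) + max 0 (c * (p + d) + e)
        - 2 * max 0 ((c * (p - d) + e + (c * (p + d) + e)) / 2) := by
  rw [secondDiff_apply, show (c * (p - d) + e + (c * (p + d) + e)) / 2 = c * p + e by ring]
  ring

lemma secondDiff_relu_nonneg (c e p d : ℝ) : 0 ≤ secondDiff p d (fun t => max 0 (c * t + e)) := by
  rw [secondDiff_relu_eq]
  linarith [two_mul_max_zero_midpoint_le (c * (p - d) + e) (c * (p + d) + e)]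

lemma abs_add_div_lt_of_secondDiff_relu_pos {c e p d : ℝ} (hd : 0 ≤ d)
    (h : 0 < secondDiff p d (fun t => max 0 (c * t + e))) : c ≠ 0 ∧ |p + e / c| < d := by
  rw [secondDiff_relu_eq] at h
  have huv : (c * (p - d) + e) * (c * (p + d) + e) < 0 :=
    mul_neg_of_two_mul_max_zero_midpoint_lt (by linarith)
  have hc : c ≠ 0 := by
    rintro rfl
    simp only [zero_mul, zero_add] at huv
    linarith [mul_self_nonneg e]
  have hroot : |c * p + e| < |c| * d := by
    refine abs_lt_of_sq_lt_sq ?_ (by positivity)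
    rw [mul_pow, sq_abs]
    nlinarith
  refine ⟨hc, ?_⟩
  rwa [show p + e / c = (c * p + e) / c by field_simp, abs_div, div_lt_iff₀ (abs_pos.2 hc),
    mul_comm d]

lemma abs_sub_lt_of_secondDiff_relu_pos {c e p q d : ℝ} (hd : 0 ≤ d)
    (hp : 0 < secondDiff p d (fun t => max 0 (c * t + e)))
    (hq : 0 < secondDiff q d (fun t => max 0 (c * t + e))) : |p - q| < 2 * d := by
  obtain ⟨-, hp⟩ := abs_add_div_lt_of_secondDiff_relu_pos hd hp
  obtain ⟨-, hq⟩ := abs_add_div_lt_of_secondDiff_relu_pos hd hq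
  calc |p - q| = |(p + e / c) - (q + e / c)| := by ring_nf
    _ ≤ |p + e / c| + |q + e / c| := abs_sub _ _
    _ < 2 * d := by linarith

lemma secondDiff_relu_of_root {c e p d : ℝ} (hd : 0 ≤ d) (h : c * p + e = 0) :
    secondDiff p d (fun t => max 0 (c * t + e)) = |c| * d := by
  rw [secondDiff_apply, show c * (p - d) + e = -(c * d) by linarith,
    show c * (p + d) + e = c * d by linarith, h]
  rcases le_total 0 c with hc | hc
  · simp [abs_of_nonneg hc, mul_nonneg hc hd]
  · simp [abs_of_nonpos hc, mul_nonpos_of_nonpos_of_nonneg hc hd]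

theorem exists_secondDiff_sum_relu_nonpos {ι κ : Type*} [Fintype ι] [Fintype κ]
    (a c e : ι → ℝ) {p : κ → ℝ} {d : ℝ} (hd : 0 ≤ d)
    (hp : Pairwise fun i i' => 2 * d ≤ |p i - p i'|)
    (hpos : #{j | 0 < a j} < Fintype.card κ) :
    ∃ i, secondDiff (p i) d (fun t => ∑ j, a j * max 0 (c j * t + e j)) ≤ 0 := by
  classical
  let active (j : ι) : Finset κ := {i | 0 < secondDiff (p i) d (fun t => max 0 (c j * t + e j))}
  have hactive (j : ι) : #(active j) ≤ 1 := Finset.card_le_one.2 fun i hi i' hi' => by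
    by_contra hne
    simp only [active, mem_filter, mem_univ, true_and] at hi hi'
    exact (hp hne).not_gt (abs_sub_lt_of_secondDiff_relu_pos hd hi hi')
  have hcard : #(({j | 0 < a j} : Finset ι).biUnion active) < #(univ : Finset κ) := calc
    _ ≤ ∑ j ∈ {j | 0 < a j}, #(active j) := card_biUnion_le
    _ ≤ #{j | 0 < a j} := by simpa using sum_le_sum fun j _ => hactive j
    _ < #(univ : Finset κ) := by rwa [card_univ]
  obtain ⟨i, -, hi⟩ := exists_mem_notMem_of_card_lt_card hcard
  refine ⟨i, ?_⟩
  simp only [secondDiff_sum, secondDiff_const_mul]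
  refine sum_nonpos fun j _ => ?_
  rcases le_or_gt (a j) 0 with ha | ha
  · exact mul_nonpos_of_nonpos_of_nonneg ha (secondDiff_relu_nonneg _ _ _ _)
  · simp only [active, mem_biUnion, mem_filter, mem_univ, true_and, not_exists, not_and,
      not_lt] at hi
    exact mul_nonpos_of_nonneg_of_nonpos ha.le (hi j ha)

lemma le_secondDiff_sum_relu {ι : Type*} [Fintype ι] (c e : ι → ℝ) {p d : ℝ} (hd : 0 ≤ d)
    {j₀ : ι} (h : c j₀ * p + e j₀ = 0) :
    |c j₀| * d ≤ secondDiff p d (fun t => ∑ j, max 0 (c j * t + e j)) := by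
  rw [secondDiff_sum, ← secondDiff_relu_of_root hd h]
  exact single_le_sum (fun j _ => secondDiff_relu_nonneg _ _ _ _) (mem_univ j₀)

section Construction

variable (k : ℕ)

/-- The vector `(A, B, 0, …, 0)`; for `k = 1` the entry `B` is dropped. -/
def planeVec (A B : ℝ) : Fin k → ℝ :=
  fun c => if (c : ℕ) = 0 then A else if (c : ℕ) = 1 then B else 0

lemma sum_planeVec_sq_le (A B : ℝ) : ∑ c, planeVec k A B c ^ 2 ≤ A ^ 2 + B ^ 2 := by
  rcases k with _ | _ | n
  · simp only [univ_eq_empty, sum_empty]; positivity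
  · simp [planeVec, sq_nonneg]
  · simp [Fin.sum_univ_succ, planeVec]

lemma planeVec_dotProduct_planeVec (hk : 1 ≤ k) {B B' : ℝ} (h : 2 ≤ k ∨ B * B' = 0) (A A' : ℝ) :
    planeVec k A B ⬝ᵥ planeVec k A' B' = A * A' + B * B' := by
  rcases k with _ | _ | n
  · omega
  · rcases h with h | h
    · omega
    · simp [dotProduct, planeVec, h]
  · simp [dotProduct, Fin.sum_univ_succ, planeVec]

lemma dotProduct_planeVec (w : Fin k → ℝ) (t B : ℝ) :
    w ⬝ᵥ planeVec k t B = (w ⬝ᵥ planeVec k 1 0) * t + w ⬝ᵥ planeVec k 0 B := by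
  simp only [dotProduct, sum_mul, ← sum_add_distrib]
  refine sum_congr rfl fun c _ => ?_
  simp only [planeVec]
  split_ifs <;> ring

noncomputable def halfWidth : ℝ := 1 / (4 * k)

noncomputable def kink (j : Fin k) : ℝ := 2 * j * halfWidth k

noncomputable def samplePoint (i : Fin k × Fin 3) : ℝ := window (kink k i.1) (halfWidth k) i.2

noncomputable def input (i : Fin k × Fin 3) : Fin k → ℝ := planeVec k (samplePoint k i) (1 / 2)

noncomputable def teacher (j : Fin k) : Fin k → ℝ := planeVec k (1 / 2) (-kink k j)

noncomputable def label (i : Fin k × Fin 3) : ℝ := ∑ j, max 0 (teacher k j ⬝ᵥ input k i)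

variable {k}

lemma halfWidth_nonneg : 0 ≤ halfWidth k := by
  unfold halfWidth; positivity

lemma halfWidth_pos (hk : 1 ≤ k) : 0 < halfWidth k := by
  have : (1 : ℝ) ≤ k := by exact_mod_cast hk
  unfold halfWidth; positivity

lemma kink_nonneg (j : Fin k) : 0 ≤ kink k j := by
  unfold kink halfWidth; positivity

lemma kink_add_halfWidth_le (j : Fin k) : kink k j + halfWidth k ≤ 1 / 2 := by
  have hj : (j : ℝ) + 1 ≤ k := by exact_mod_cast j.isLt
  have hk : (0 : ℝ) < k := by linarith [(j : ℕ).cast_nonneg (α := ℝ)]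
  unfold kink halfWidth
  field_simp
  linarith

lemma abs_samplePoint_le (i : Fin k × Fin 3) : |samplePoint k i| ≤ 1 / 2 := by
  obtain ⟨j, r⟩ := i
  obtain ⟨hlo, hhi⟩ := window_mem_Icc (kink k j) halfWidth_nonneg r
  have := kink_nonneg j
  have := kink_add_halfWidth_le j
  rw [samplePoint, abs_le]
  constructor <;> linarith

lemma two_mul_halfWidth_le_abs_kink_sub {i j : Fin k} (h : i ≠ j) :
    2 * halfWidth k ≤ |kink k i - kink k j| := by
  have hij : (1 : ℝ) ≤ |(i : ℝ) - j| := by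
    have h' : ((i : ℕ) : ℤ) - (j : ℕ) ≠ 0 := sub_ne_zero.2 (by exact_mod_cast Fin.val_ne_of_ne h)
    exact_mod_cast Int.one_le_abs h'
  rw [show kink k i - kink k j = ((i : ℝ) - j) * (2 * halfWidth k) by unfold kink; ring,
    abs_mul, abs_of_nonneg (show 0 ≤ 2 * halfWidth k by linarith [halfWidth_nonneg (k := k)])]
  nlinarith [halfWidth_nonneg (k := k)]

/-- For `k = 1` there is no bias coordinate, but then the only kink is `kink 1 0 = 0`. -/
lemma teacher_dotProduct_planeVec (hk : 1 ≤ k) (j : Fin k) (t : ℝ) :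
    teacher k j ⬝ᵥ planeVec k t (1 / 2) = 1 / 2 * t + -(kink k j / 2) := by
  have h : 2 ≤ k ∨ -kink k j * (1 / 2) = 0 := by
    rcases le_or_gt 2 k with h | h
    · exact Or.inl h
    · have : (j : ℕ) = 0 := by omega
      simp [kink, this]
  rw [teacher, planeVec_dotProduct_planeVec k hk h]
  ring

lemma sum_input_sq_le (i : Fin k × Fin 3) : ∑ c, input k i c ^ 2 ≤ 1 := by
  have hs := abs_le.1 (abs_samplePoint_le i)
  have := sum_planeVec_sq_le k (samplePoint k i) (1 / 2)
  unfold input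
  nlinarith

lemma sum_teacher_sq_le (j : Fin k) : ∑ c, teacher k j c ^ 2 ≤ 1 := by
  have := kink_nonneg j
  have := kink_add_halfWidth_le j
  have := halfWidth_nonneg (k := k)
  have := sum_planeVec_sq_le k (1 / 2) (-kink k j)
  unfold teacher
  nlinarith

lemma label_nonneg (i : Fin k × Fin 3) : 0 ≤ label k i :=
  sum_nonneg fun _ _ => le_max_left _ _

lemma label_le (hk : 1 ≤ k) (i : Fin k × Fin 3) : label k i ≤ k := by
  have hs := abs_le.1 (abs_samplePoint_le i)
  calc label k i ≤ ∑ _j : Fin k, (1 : ℝ) := by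
        refine sum_le_sum fun j _ => max_le zero_le_one ?_
        rw [input, teacher_dotProduct_planeVec hk]
        linarith [kink_nonneg j]
    _ = k := by simp

theorem halfWidth_sq_div_le_sum_sq_error (hk : 1 ≤ k) (w : Fin k → Fin k → ℝ) (a : Fin k → ℝ)
    (hpos : #{j | 0 < a j} < k) :
    halfWidth k ^ 2 / 24 ≤ ∑ i, (∑ j, a j * max 0 (w j ⬝ᵥ input k i) - label k i) ^ 2 := by
  set d := halfWidth k
  let f : ℝ → ℝ := fun t =>
    ∑ j, a j * max 0 ((w j ⬝ᵥ planeVec k 1 0) * t + w j ⬝ᵥ planeVec k 0 (1 / 2))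
  let g : ℝ → ℝ := fun t => ∑ j, max 0 (1 / 2 * t + -(kink k j / 2))
  have herr (i) : ∑ j, a j * max 0 (w j ⬝ᵥ input k i) - label k i = (f - g) (samplePoint k i) := by
    simp only [input, label, teacher_dotProduct_planeVec hk]
    simp only [dotProduct_planeVec _ _ (samplePoint k i), Pi.sub_apply, f, g]
  obtain ⟨j₀, hf⟩ := exists_secondDiff_sum_relu_nonpos a _ _ (halfWidth_pos hk).le
    (fun i j hij => two_mul_halfWidth_le_abs_kink_sub hij) (by simpa using hpos)
  have hg : |(1 / 2 : ℝ)| * d ≤ secondDiff (kink k j₀) d g :=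
    le_secondDiff_sum_relu (fun _ => 1 / 2) (fun j => -(kink k j / 2)) (halfWidth_pos hk).le
      (j₀ := j₀) (by ring)
  rw [abs_of_pos one_half_pos] at hg
  calc d ^ 2 / 24 ≤ secondDiff (kink k j₀) d (f - g) ^ 2 / 6 := by
        rw [map_sub]; nlinarith [halfWidth_pos hk]
    _ ≤ ∑ r, (f - g) (window (kink k j₀) d r) ^ 2 := by
        linarith [sq_secondDiff_le (kink k j₀) d (f - g)]
    _ ≤ ∑ i, (f - g) (samplePoint k i) ^ 2 := by
        rw [Fintype.sum_prod_type]
        exact single_le_sum (f := fun j => ∑ r, (f - g) (samplePoint k (j, r)) ^ 2)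
          (fun _ _ => sum_nonneg fun _ _ => sq_nonneg _) (mem_univ j₀)
    _ = _ := by simp only [herr]

end Construction

end ReLUGadget

open ReLUGadget

/-- The negative-coefficient gadget (Lemma 5.1): a set of bounded
labelled samples realizable by a non-negative sum of k ReLUs with unit-norm
weights, but incurring average squared error at least `τ > 0` for any weighted
sum of k ReLUs with at least one negative coefficient. -/
theorem negative_coefficient_gadget (k : ℕ) (hk : 1 ≤ k) :
    ∃ (m : ℕ) (_ : 1 ≤ m) (x : Fin m → Fin k → ℝ) (y : Fin m → ℝ) (τ : ℝ),
      0 < τ ∧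
      (∀ i : Fin m, ∑ j, (x i j) ^ 2 ≤ 1) ∧
      (∀ i : Fin m, 0 ≤ y i ∧ y i ≤ (k : ℝ)) ∧
      (∃ w : Fin k → Fin k → ℝ,
        (∀ j : Fin k, ∑ c, (w j c) ^ 2 ≤ 1) ∧
        (∀ i : Fin m, ∑ j : Fin k, max 0 (∑ c, w j c * x i c) = y i)) ∧
      (∀ (w : Fin k → Fin k → ℝ) (a : Fin k → ℝ),
        (∀ j, a j = 1 ∨ a j = -1) → a ≠ (fun _ => 1) →
        (1 / (m : ℝ)) *
            ∑ i : Fin m, (∑ j : Fin k, a j * max 0 (∑ c, w j c * x i c) - y i) ^ 2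
          ≥ τ) := by
  let e : Fin k × Fin 3 ≃ Fin (k * 3) := finProdFinEquiv
  have hd := halfWidth_pos hk
  refine ⟨k * 3, by omega, fun i => input k (e.symm i), fun i => label k (e.symm i),
    halfWidth k ^ 2 / (72 * k), by positivity, fun i => sum_input_sq_le _,
    fun i => ⟨label_nonneg _, label_le hk _⟩, ⟨teacher k, sum_teacher_sq_le, fun i => rfl⟩,
    fun w a ha hne => ?_⟩
  obtain ⟨j, hj⟩ := Function.ne_iff.1 hne
  have hpos : #{j | 0 < a j} < k := by
    simpa using card_lt_univ_of_notMem (s := {j | 0 < a j}) (x := j)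
      (by simp [(ha j).resolve_left hj])
  have key := halfWidth_sq_div_le_sum_sq_error hk w a hpos
  rw [← e.sum_comp]
  simp only [Equiv.symm_apply_apply]
  calc halfWidth k ^ 2 / (72 * k) = 1 / ((k * 3 : ℕ) : ℝ) * (halfWidth k ^ 2 / 24) := by
        push_cast; field_simp; ring
    _ ≤ _ := by gcongr; exact key
end

section
/- Let n ≥ 1 and let u ∈ ℝⁿ be a unit vector (‖u‖₂ = 1). Then: (i) taking w₁ = u and w₂ = −u gives max(0, w₁·u) + max(0, w₂·u) = 1 and max(0, w₁·(−u)) + max(0, w₂·(−u)) = 1; and (ii) for all w₁, w₂ ∈ ℝⁿ: (max(0, w₁·u) − max(0, w₂·u) − 1)² + (max(0, w₁·(−u)) − max(0, w₂·(−u)) − 1)² ≥ 1. -/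
/-! On the samples `u` and `-u` the two ReLU features take the values `s⁺, t⁺` and `s⁻, t⁻`
with `s = w₁ ⬝ᵥ u`, `t = w₂ ⬝ᵥ u`. One of `s⁺, s⁻` vanishes, and on that sample the output
`0 - t⁺` (or `0 - t⁻`) is nonpositive, so it misses the label `1` by at least `1`. The sum
of the two ReLUs instead outputs `|u ⬝ᵥ u| = 1` on both samples. -/

open Matrix

lemma relu_add_relu_neg (s : ℝ) : max 0 s + max 0 (-s) = |s| := by
  rw [max_comm, max_comm 0, max_zero_add_max_neg_zero_eq_abs_self]

lemma one_le_sq_relu_sub_relu_sub_one {s : ℝ} (hs : s ≤ 0) (t : ℝ) :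
    1 ≤ (max 0 s - max 0 t - 1) ^ 2 := by
  rw [max_eq_left hs]
  nlinarith [le_max_left 0 t]

lemma one_le_relu_sub_relu_error (s t : ℝ) :
    1 ≤ (max 0 s - max 0 t - 1) ^ 2 + (max 0 (-s) - max 0 (-t) - 1) ^ 2 := by
  rcases le_total s 0 with hs | hs
  · linarith [one_le_sq_relu_sub_relu_sub_one hs t, sq_nonneg (max 0 (-s) - max 0 (-t) - 1)]
  · linarith [one_le_sq_relu_sub_relu_sub_one (neg_nonpos.2 hs) (-t),
      sq_nonneg (max 0 s - max 0 t - 1)]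

theorem two_relu_gadget_general (n : ℕ) (u : Fin n → ℝ)
    (hu : ∑ i, (u i) ^ 2 = 1) :
    ((max 0 (∑ i, u i * u i) + max 0 (∑ i, (-u i) * u i) = 1) ∧
      (max 0 (∑ i, u i * (-u i)) + max 0 (∑ i, (-u i) * (-u i)) = 1)) ∧
    (∀ w₁ w₂ : Fin n → ℝ,
      (max 0 (∑ i, w₁ i * u i) - max 0 (∑ i, w₂ i * u i) - 1) ^ 2
        + (max 0 (∑ i, w₁ i * (-u i)) - max 0 (∑ i, w₂ i * (-u i)) - 1) ^ 2
        ≥ 1) := by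
  have huu : u ⬝ᵥ u = 1 := by simpa only [dotProduct, sq] using hu
  refine ⟨⟨?_, ?_⟩, fun w₁ w₂ => ?_⟩
  · change max 0 (u ⬝ᵥ u) + max 0 (-u ⬝ᵥ u) = 1
    rw [neg_dotProduct, relu_add_relu_neg, huu, abs_one]
  · change max 0 (u ⬝ᵥ -u) + max 0 (-u ⬝ᵥ -u) = 1
    rw [dotProduct_neg, neg_dotProduct, dotProduct_neg, neg_neg, add_comm, relu_add_relu_neg,
      huu, abs_one]
  · change 1 ≤ (max 0 (w₁ ⬝ᵥ u) - max 0 (w₂ ⬝ᵥ u) - 1) ^ 2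
        + (max 0 (w₁ ⬝ᵥ -u) - max 0 (w₂ ⬝ᵥ -u) - 1) ^ 2
    rw [dotProduct_neg, dotProduct_neg]
    exact one_le_relu_sub_relu_error _ _

/-- The k = 2 case of the negative-coefficient gadget: the samples
`(u, 1)` and `(−u, 1)` are realizable by `max(0, u·x) + max(0, −u·x)`, but any
difference of two ReLUs incurs total squared error at least 1 on them. -/
theorem two_relu_gadget (n : ℕ) (hn : 1 ≤ n) (u : Fin n → ℝ)
    (hu : ∑ i, (u i) ^ 2 = 1) :
    ((max 0 (∑ i, u i * u i) + max 0 (∑ i, (-u i) * u i) = 1) ∧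
      (max 0 (∑ i, u i * (-u i)) + max 0 (∑ i, (-u i) * (-u i)) = 1)) ∧
    (∀ w₁ w₂ : Fin n → ℝ,
      (max 0 (∑ i, w₁ i * u i) - max 0 (∑ i, w₂ i * u i) - 1) ^ 2
        + (max 0 (∑ i, w₁ i * (-u i)) - max 0 (∑ i, w₂ i * (-u i)) - 1) ^ 2
        ≥ 1) :=
  two_relu_gadget_general n u hu
end

section
/- Let n, k, m, m̃ ≥ 1 be integers. Let (x_i, y_i)_{i=1}^{m} ⊆ ℝⁿ × ℝ and (x̃_i, ỹ_i)_{i=1}^{m̃} ⊆ ℝ^k × ℝ, and let τ > 0 be such that for all w̃¹,…,w̃^k ∈ ℝ^k and all a ∈ {−1,1}^k with a ≠ (1,…,1): (1/m̃)·Σ_{i=1}^{m̃} (Σ_{j=1}^{k} a_j·max(0, w̃^j·x̃_i) − ỹ_i)² ≥ τ. Let Ŝ be the multiset of 2·m·m̃ labelled samples in ℝ^{n+k} × ℝ consisting of m̃ copies of (x_i ∘ 0_k, y_i/2) for each i ∈ {1,…,m} and m copies of (0_n ∘ x̃_i, ỹ_i/2) for each i ∈ {1,…,m̃}, where ∘ denotes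 concatenation and 0_p the zero vector in ℝ^p. Then for all ŵ¹,…,ŵ^k ∈ ℝ^{n+k} and all a ∈ {−1,1}^k with a ≠ (1,…,1): (1/(2·m·m̃))·Σ_{(x̂,ŷ)∈Ŝ} (Σ_{j=1}^{k} a_j·max(0, ŵ^j·x̂) − ŷ)² ≥ τ/8. -/
/-!
The gadget samples `(0 ∘ x̃ᵢ, ỹᵢ/2)` see only the last `k` coordinates of each weight vector, and
by positive homogeneity of the rectifier the padded network on them computes half of the `k`-input
network with weights `2 ŵʲ|ₖ`. Its residuals there are therefore half of residuals of a network
covered by the soundness hypothesis. Dropping the (nonnegative) error on the original samples, the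
gadget samples carry weight `m m̃` out of `2 m m̃`, which gives `(1/2) · (1/4) · τ`.
-/

open Finset

def reluNet {κ ι : Type*} [Fintype κ] [Fintype ι] (a : κ → ℝ) (w : κ → ι → ℝ) (x : ι → ℝ) : ℝ :=
  ∑ j, a j * max 0 (∑ c, w j c * x c)

section ReluNet

variable {κ ι ι' : Type*} [Fintype κ] [Fintype ι] [Fintype ι']

theorem reluNet_mul_weights (a : κ → ℝ) (w : κ → ι → ℝ) (x : ι → ℝ) {t : ℝ} (ht : 0 ≤ t) :
    reluNet a (fun j c => t * w j c) x = t * reluNet a w x := by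
  simp only [reluNet, mul_sum]
  refine sum_congr rfl fun j _ => ?_
  have hinner : ∑ c, t * w j c * x c = t * ∑ c, w j c * x c := by
    simp only [mul_sum, mul_assoc]
  rw [hinner, mul_left_comm, mul_max_of_nonneg _ _ ht, mul_zero]

theorem reluNet_sumElim_zero_left (a : κ → ℝ) (w : κ → ι ⊕ ι' → ℝ) (z : ι' → ℝ) :
    reluNet a w (Sum.elim 0 z) = reluNet a (fun j c => w j (Sum.inr c)) z := by
  simp [reluNet, Fintype.sum_sum_type]

end ReluNet

theorem le_padded_mean {ι : Type*} [Fintype ι] {m mt A : ℝ} (hm : 0 < m) (hmt : 0 ≤ mt)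
    (hA : 0 ≤ A) (r : ι → ℝ) :
    1 / 8 * (1 / mt * ∑ i, r i ^ 2) ≤ 1 / (2 * m * mt) * (A + ∑ i, m * (r i / 2) ^ 2) := by
  have hpad : ∑ i, m * (r i / 2) ^ 2 = m / 4 * ∑ i, r i ^ 2 := by
    rw [mul_sum]
    exact sum_congr rfl fun i _ => by ring
  have hrescale : 1 / 8 * (1 / mt * ∑ i, r i ^ 2) = 1 / (2 * m * mt) * (m / 4 * ∑ i, r i ^ 2) := by
    field_simp
    ring
  rw [hpad, hrescale]
  gcongr
  exact le_add_of_nonneg_left hA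

theorem padding_soundness_general
    (n k m mt : ℕ) (hm : 1 ≤ m)
    (x : Fin m → Fin n → ℝ) (y : Fin m → ℝ)
    (xt : Fin mt → Fin k → ℝ) (yt : Fin mt → ℝ)
    (τ : ℝ)
    (hsound : ∀ (wt : Fin k → Fin k → ℝ) (a : Fin k → ℝ),
      (∀ j, a j = 1 ∨ a j = -1) → a ≠ (fun _ => 1) →
      (1 / (mt : ℝ)) *
          ∑ i : Fin mt, (∑ j : Fin k, a j * max 0 (∑ c, wt j c * xt i c) - yt i) ^ 2
        ≥ τ) :
    ∀ (w : Fin k → (Fin n ⊕ Fin k) → ℝ) (a : Fin k → ℝ),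
      (∀ j, a j = 1 ∨ a j = -1) → a ≠ (fun _ => 1) →
      (1 / (2 * (m : ℝ) * (mt : ℝ))) *
          ((∑ i : Fin m, (mt : ℝ) *
              (∑ j : Fin k, a j * max 0 (∑ c, w j c * (Sum.elim (x i) (0 : Fin k → ℝ)) c)
                - y i / 2) ^ 2)
            + ∑ i : Fin mt, (m : ℝ) *
              (∑ j : Fin k, a j * max 0 (∑ c, w j c * (Sum.elim (0 : Fin n → ℝ) (xt i)) c)
                - yt i / 2) ^ 2)
        ≥ τ / 8 := by
  intro w a ha hne
  let wt : Fin k → Fin k → ℝ := fun j c => 2 * w j (Sum.inr c)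
  have hresidual : ∀ i, reluNet a w (Sum.elim 0 (xt i)) - yt i / 2
      = (reluNet a wt (xt i) - yt i) / 2 := fun i => by
    rw [reluNet_mul_weights _ _ _ zero_le_two, ← reluNet_sumElim_zero_left]
    ring
  have hmean := le_padded_mean (A := ∑ i : Fin m, (mt : ℝ) *
      (reluNet a w (Sum.elim (x i) 0) - y i / 2) ^ 2)
    (Nat.cast_pos.mpr hm) (Nat.cast_nonneg mt) (by positivity)
    fun i => reluNet a wt (xt i) - yt i
  simp only [← hresidual] at hmean
  have hgadget : τ ≤ 1 / mt * ∑ i, (reluNet a wt (xt i) - yt i) ^ 2 := hsound wt a ha hne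
  calc τ / 8 ≤ 1 / 8 * (1 / mt * ∑ i, (reluNet a wt (xt i) - yt i) ^ 2) := by linarith
    _ ≤ _ := hmean

/-- Soundness half of the padding construction (Theorem 1.5):
appending the negative-coefficient gadget samples (with soundness parameter τ) to
an arbitrary sample set forces any k-ReLU network with a negative coefficient to
incur average squared error at least `τ/8`. Concatenated coordinates are modeled
by the sum type `Fin n ⊕ Fin k`. -/
theorem padding_soundness
    (n k m mt : ℕ) (hn : 1 ≤ n) (hk : 1 ≤ k) (hm : 1 ≤ m) (hmt : 1 ≤ mt)
    (x : Fin m → Fin n → ℝ) (y : Fin m → ℝ)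
    (xt : Fin mt → Fin k → ℝ) (yt : Fin mt → ℝ)
    (τ : ℝ) (hτ : 0 < τ)
    (hsound : ∀ (wt : Fin k → Fin k → ℝ) (a : Fin k → ℝ),
      (∀ j, a j = 1 ∨ a j = -1) → a ≠ (fun _ => 1) →
      (1 / (mt : ℝ)) *
          ∑ i : Fin mt, (∑ j : Fin k, a j * max 0 (∑ c, wt j c * xt i c) - yt i) ^ 2
        ≥ τ) :
    ∀ (w : Fin k → (Fin n ⊕ Fin k) → ℝ) (a : Fin k → ℝ),
      (∀ j, a j = 1 ∨ a j = -1) → a ≠ (fun _ => 1) →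
      (1 / (2 * (m : ℝ) * (mt : ℝ))) *
          ((∑ i : Fin m, (mt : ℝ) *
              (∑ j : Fin k, a j * max 0 (∑ c, w j c * (Sum.elim (x i) (0 : Fin k → ℝ)) c)
                - y i / 2) ^ 2)
            + ∑ i : Fin mt, (m : ℝ) *
              (∑ j : Fin k, a j * max 0 (∑ c, w j c * (Sum.elim (0 : Fin n → ℝ) (xt i)) c)
                - yt i / 2) ^ 2)
        ≥ τ / 8 :=
  padding_soundness_general n k m mt hm x y xt yt τ hsound
end
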